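/- arXiv:hep-th/9608007 — 6 statements merged into one kernel-verified Lean document; each statement's English description precedes it below -/
import Mathlib

section
/- Let x : ℝ → I be a C¹ strictly increasing bijection onto an open interval I ⊆ ℝ with x'(y) > 0 for all y, and let f₁, f₂ be positive-frequency functions. Assume that the map k ↦ |f̌₂^(k) f̌₁^(−k)|/k is Lebesgue integrable on (0,∞) and that (y,y') ↦ f₁(y) f₂(y') log[(x(y)−x(y'))/(y−y')] is Lebesgue integrable on ℝ². Then ∫₀^∞ (dk/(2k)) f̌₂^(k) f̌₁^(−k) = −(1/(4π)) ∬_{ℝ²} f₁(y) log[(x(y)−x(y'))/(y−y')] f₂(y') dy dy'. -/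
open MeasureTheory

/-- Fourier transform convention: `ft g k = (1/√(2π)) ∫ g t e^{-ikt} dt`. -/
noncomputable def ft (g : ℝ → ℂ) (k : ℝ) : ℂ :=
  (1 / Real.sqrt (2 * Real.pi)) * ∫ t : ℝ, g t * Complex.exp (-(Complex.I * k * t))

/-!
Changing variables `u = x y` in both Fourier integrals writes `f̌₂^(k) f̌₁^(-k)` as
`(2π)⁻¹ ∬ f₁ y f₂ y' exp (i k (x y - x y'))`; for `k > 0` the same integral with the flat phase
`exp (i k (y - y'))` is `f̂₂(k) f̂₁(-k) = 0`, so it may be subtracted. Truncating the `k`-integral to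
`[1/n, n]` and exchanging the order of integration leaves the Frullani-type integral
`∫ (exp (i k a) - exp (i k b)) / (2k) dk` with `a = x y - x y'` and `b = y - y'` of the same sign.
It is bounded by `|log (a / b)|` and tends to `-log (a / b) / 2`: near `k = 0` the kernel behaves
like `dk / k`, and the contribution of large `k` vanishes by the Riemann–Lebesgue lemma.
Dominated convergence concludes.
-/

open Set Filter Topology

section Frullani

open Complex ComplexConjugate

noncomputable def expIDiv (t : ℝ) : ℂ := exp (I * t) / t

lemma norm_exp_I_mul_mul (k a : ℝ) : ‖exp (I * k * a)‖ = 1 := by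
  rw [mul_assoc, ← ofReal_mul, norm_exp_I_mul_ofReal]

lemma intervalIntegrable_exp_I_mul_div (a : ℝ) {c d : ℝ} (h : (0 : ℝ) ∉ uIcc c d) :
    IntervalIntegrable (fun k : ℝ => exp (I * k * a) / k) volume c d :=
  ContinuousOn.intervalIntegrable <| by
    fun_prop (disch := intro t ht; exact_mod_cast ne_of_mem_of_not_mem ht h)

lemma intervalIntegrable_expIDiv {c d : ℝ} (h : (0 : ℝ) ∉ uIcc c d) :
    IntervalIntegrable expIDiv volume c d := by
  have := intervalIntegrable_exp_I_mul_div 1 h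
  simp only [ofReal_one, mul_one] at this
  exact this

lemma norm_integral_expIDiv_le_abs_log {c d : ℝ} (hc : 0 < c) (hd : 0 < d) :
    ‖∫ t in c..d, expIDiv t‖ ≤ |Real.log (d / c)| := by
  have h0 : (0 : ℝ) ∉ uIcc c d := notMem_uIcc_of_lt hc hd
  calc ‖∫ t in c..d, expIDiv t‖ ≤ |∫ t in c..d, ‖expIDiv t‖| :=
        intervalIntegral.norm_integral_le_abs_integral_norm
    _ = |∫ t in c..d, 1 / t| := by
        congr 1
        refine intervalIntegral.integral_congr fun t ht => ?_
        have ht0 : 0 < t := (lt_min hc hd).trans_le ht.1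
        simp [expIDiv, abs_of_pos ht0]
    _ = |Real.log (d / c)| := by rw [integral_one_div h0]

lemma norm_expIDiv_sub_inv_le {t : ℝ} (ht : |t| ≤ 1) : ‖expIDiv t - (t : ℂ)⁻¹‖ ≤ 2 := by
  rcases eq_or_ne t 0 with rfl | ht0
  · simp [expIDiv]
  have hexp : ‖exp (I * t) - 1‖ ≤ 2 * |t| := by
    simpa using norm_exp_sub_one_le (x := I * t) (by simpa using ht)
  rw [expIDiv, div_eq_mul_inv, ← sub_one_mul, norm_mul, norm_inv, norm_real, Real.norm_eq_abs]
  calc ‖exp (I * t) - 1‖ * |t|⁻¹ ≤ 2 * |t| * |t|⁻¹ := by gcongr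
    _ = 2 := by field_simp

/-- Near `0` the kernel `exp (I t) / t` is `1 / t` up to a bounded error. -/
lemma tendsto_integral_expIDiv_mul_nhdsGT {a b : ℝ} (ha : 0 < a) (hb : 0 < b) :
    Tendsto (fun δ => ∫ t in a * δ..b * δ, expIDiv t) (𝓝[>] 0) (𝓝 (Real.log (b / a))) := by
  have hsmall : ∀ᶠ δ in 𝓝[>] (0 : ℝ), 0 < δ ∧ max a b * δ ≤ 1 := by
    have : ∀ᶠ δ in 𝓝 (0 : ℝ), max a b * δ < 1 :=
      ((continuous_const.mul continuous_id).tendsto' 0 0 (mul_zero _)).eventually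
        (eventually_lt_nhds one_pos)
    filter_upwards [self_mem_nhdsWithin, nhdsWithin_le_nhds this] with δ hδ h using ⟨hδ, h.le⟩
  have hbound : ∀ᶠ δ in 𝓝[>] (0 : ℝ),
      ‖(∫ t in a * δ..b * δ, expIDiv t) - Real.log (b / a)‖ ≤ 2 * |b * δ - a * δ| := by
    filter_upwards [hsmall] with δ ⟨hδ, hδ1⟩
    have h0 : (0 : ℝ) ∉ uIcc (a * δ) (b * δ) := notMem_uIcc_of_lt (by positivity) (by positivity)
    have hlog : (Real.log (b / a) : ℂ) = ∫ t in a * δ..b * δ, (t : ℂ)⁻¹ := by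
      simp_rw [← ofReal_inv, intervalIntegral.integral_ofReal, ← one_div, integral_one_div h0,
        mul_div_mul_right _ _ hδ.ne']
    have hinv : IntervalIntegrable (fun t : ℝ => (t : ℂ)⁻¹) volume (a * δ) (b * δ) := by
      simpa using intervalIntegrable_exp_I_mul_div 0 h0
    rw [hlog, ← intervalIntegral.integral_sub (intervalIntegrable_expIDiv h0) hinv]
    refine intervalIntegral.norm_integral_le_of_norm_le_const fun t ht => norm_expIDiv_sub_inv_le ?_
    have ht' := uIoc_subset_uIcc ht
    have ht0 : 0 < t := (lt_min (by positivity) (by positivity)).trans_le ht'.1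
    rw [abs_of_pos ht0]
    calc t ≤ max (a * δ) (b * δ) := ht'.2
      _ = max a b * δ := (max_mul_of_nonneg _ _ hδ.le).symm
      _ ≤ 1 := hδ1
  rw [← tendsto_sub_nhds_zero_iff]
  refine squeeze_zero_norm' hbound ?_
  have : Continuous fun δ : ℝ => 2 * |b * δ - a * δ| := by fun_prop
  simpa using (this.tendsto' 0 _ rfl).mono_left nhdsWithin_le_nhds

/-- Riemann–Lebesgue lemma for the weight `1 / v` on `[a, b]` (if `0 ∈ [a, b]`, all the integrals
are junk `0`). -/
lemma tendsto_integral_exp_I_mul_div_atTop (a b : ℝ) :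
    Tendsto (fun K : ℝ => ∫ v in a..b, exp (I * v * K) / v) atTop (𝓝 0) := by
  have hRL := Real.tendsto_integral_exp_smul_cocompact ((uIoc a b).indicator fun v : ℝ => (v : ℂ)⁻¹)
  have hw : Tendsto (fun K : ℝ => -(2 * Real.pi)⁻¹ * K) atTop (cocompact ℝ) :=
    (tendsto_id.const_mul_atTop_of_neg (by simp [Real.pi_pos])).trans atBot_le_cocompact
  have := (hRL.comp hw).const_smul (if a ≤ b then 1 else -1 : ℝ)
  rw [smul_zero] at this
  refine this.congr fun K => ?_
  rw [intervalIntegral.intervalIntegral_eq_integral_uIoc, ← integral_indicator measurableSet_uIoc]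
  congr 1
  refine integral_congr_ae (ae_of_all _ fun v => ?_)
  by_cases hv : v ∈ uIoc a b
  · simp only [indicator_of_mem hv, Circle.smul_def, Real.fourierChar_apply, smul_eq_mul,
      div_eq_mul_inv]
    congr 2
    push_cast
    field_simp [Real.pi_ne_zero]
  · simp [hv]

lemma integral_exp_I_mul_div_eq_integral_expIDiv {a : ℝ} (ha : a ≠ 0) (c d : ℝ) :
    ∫ k in c..d, exp (I * k * a) / k = ∫ t in a * c..a * d, expIDiv t := by
  rw [← intervalIntegral.smul_integral_comp_mul_left, ← intervalIntegral.integral_smul]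
  refine intervalIntegral.integral_congr fun k _ => ?_
  rcases eq_or_ne k 0 with rfl | hk
  · simp [expIDiv]
  · have ha' : (a : ℂ) ≠ 0 := ofReal_ne_zero.2 ha
    simp only [expIDiv, real_smul, ofReal_mul]
    field_simp

lemma tendsto_integral_expIDiv_mul_atTop (a b : ℝ) :
    Tendsto (fun K : ℝ => ∫ t in a * K..b * K, expIDiv t) atTop (𝓝 0) := by
  refine (tendsto_integral_exp_I_mul_div_atTop a b).congr' ?_
  filter_upwards [eventually_ne_atTop 0] with K hK
  rw [integral_exp_I_mul_div_eq_integral_expIDiv hK, mul_comm a, mul_comm b]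

noncomputable def truncFrullani (a b : ℝ) (n : ℕ) : ℂ :=
  ∫ k in Ioc (n : ℝ)⁻¹ n, (exp (I * k * a) - exp (I * k * b)) / (2 * k)

lemma truncFrullani_eq {a b : ℝ} (ha : 0 < a) (hb : 0 < b) {n : ℕ} (hn : 0 < n) :
    truncFrullani a b n =
      ((∫ t in a * (n : ℝ)⁻¹..b * (n : ℝ)⁻¹, expIDiv t) - ∫ t in a * n..b * n, expIDiv t) / 2 := by
  have hn1 : (1 : ℝ) ≤ n := Nat.one_le_cast.2 hn
  have hn' : (0 : ℝ) < n := by positivity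
  have h0 : (0 : ℝ) ∉ uIcc (n : ℝ)⁻¹ n := notMem_uIcc_of_lt (by positivity) hn'
  have hsplit : ∀ k : ℝ, (exp (I * k * a) - exp (I * k * b)) / (2 * k) =
      (exp (I * k * a) / k - exp (I * k * b) / k) / 2 := fun k => by ring
  have hφ : ∀ {c d : ℝ}, 0 < c → 0 < d → IntervalIntegrable expIDiv volume c d :=
    fun hc hd => intervalIntegrable_expIDiv (notMem_uIcc_of_lt hc hd)
  have h₁ := intervalIntegral.integral_add_adjacent_intervals
    (hφ (c := a * (n : ℝ)⁻¹) (d := a * n) (by positivity) (by positivity))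
    (hφ (d := b * n) (by positivity) (by positivity))
  have h₂ := intervalIntegral.integral_add_adjacent_intervals
    (hφ (c := a * (n : ℝ)⁻¹) (d := b * (n : ℝ)⁻¹) (by positivity) (by positivity))
    (hφ (d := b * n) (by positivity) (by positivity))
  rw [truncFrullani, ← intervalIntegral.integral_of_le ((inv_le_one_of_one_le₀ hn1).trans hn1)]
  simp_rw [hsplit]
  rw [intervalIntegral.integral_div, intervalIntegral.integral_sub
    (intervalIntegrable_exp_I_mul_div a h0) (intervalIntegrable_exp_I_mul_div b h0),
    integral_exp_I_mul_div_eq_integral_expIDiv ha.ne', integral_exp_I_mul_div_eq_integral_expIDiv hb.ne']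
  linear_combination (h₁ - h₂) / 2

lemma truncFrullani_zero (a b : ℝ) : truncFrullani a b 0 = 0 := by
  simp [truncFrullani]

lemma truncFrullani_neg (a b : ℝ) (n : ℕ) :
    truncFrullani (-a) (-b) n = conj (truncFrullani a b n) := by
  rw [truncFrullani, truncFrullani, ← integral_conj]
  refine setIntegral_congr_fun measurableSet_Ioc fun k _ => ?_
  simp only [map_div₀, map_sub, ← exp_conj, map_mul, conj_I, conj_ofReal, map_ofNat, ofReal_neg]
  ring_nf

lemma norm_truncFrullani_le_of_pos {a b : ℝ} (ha : 0 < a) (hb : 0 < b) (n : ℕ) :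
    ‖truncFrullani a b n‖ ≤ |Real.log (a / b)| := by
  rcases Nat.eq_zero_or_pos n with rfl | hn
  · simp [truncFrullani_zero]
  have hn' : (0 : ℝ) < n := Nat.cast_pos.2 hn
  have hlog : ∀ {c : ℝ}, 0 < c → ‖∫ t in a * c..b * c, expIDiv t‖ ≤ |Real.log (a / b)| := by
    intro c hc
    refine (norm_integral_expIDiv_le_abs_log (by positivity) (by positivity)).trans_eq ?_
    rw [mul_div_mul_right _ _ hc.ne', ← abs_neg, ← Real.log_inv, inv_div]
  rw [truncFrullani_eq ha hb hn, norm_div, RCLike.norm_ofNat]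
  linarith [norm_sub_le (∫ t in a * (n : ℝ)⁻¹..b * (n : ℝ)⁻¹, expIDiv t)
    (∫ t in a * n..b * n, expIDiv t), hlog (inv_pos.2 hn'), hlog hn']

lemma tendsto_truncFrullani_of_pos {a b : ℝ} (ha : 0 < a) (hb : 0 < b) :
    Tendsto (truncFrullani a b) atTop (𝓝 (-(Real.log (a / b) : ℂ) / 2)) := by
  have hsmall := (tendsto_integral_expIDiv_mul_nhdsGT ha hb).comp
    (tendsto_inv_atTop_nhdsGT_zero.comp tendsto_natCast_atTop_atTop)
  have hlarge := (tendsto_integral_expIDiv_mul_atTop a b).comp tendsto_natCast_atTop_atTop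
  have hlim : -(Real.log (a / b) : ℂ) / 2 = ((Real.log (b / a) : ℂ) - 0) / 2 := by
    rw [sub_zero, ← inv_div a b, Real.log_inv, ofReal_neg]
  rw [hlim]
  refine ((hsmall.sub hlarge).div_const 2).congr' ?_
  filter_upwards [eventually_gt_atTop 0] with n hn
  exact (truncFrullani_eq ha hb hn).symm

lemma norm_truncFrullani_le {a b : ℝ} (hab : 0 < a * b) (n : ℕ) :
    ‖truncFrullani a b n‖ ≤ |Real.log (a / b)| := by
  rcases pos_and_pos_or_neg_and_neg_of_mul_pos hab with ⟨ha, hb⟩ | ⟨ha, hb⟩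
  · exact norm_truncFrullani_le_of_pos ha hb n
  · rw [← neg_neg a, ← neg_neg b, truncFrullani_neg, RCLike.norm_conj, neg_div_neg_eq]
    exact norm_truncFrullani_le_of_pos (neg_pos.2 ha) (neg_pos.2 hb) n

lemma tendsto_truncFrullani {a b : ℝ} (hab : 0 < a * b) :
    Tendsto (truncFrullani a b) atTop (𝓝 (-(Real.log (a / b) : ℂ) / 2)) := by
  rcases pos_and_pos_or_neg_and_neg_of_mul_pos hab with ⟨ha, hb⟩ | ⟨ha, hb⟩
  · exact tendsto_truncFrullani_of_pos ha hb
  · have h := (continuous_conj.tendsto _).comp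
      (tendsto_truncFrullani_of_pos (neg_pos.2 ha) (neg_pos.2 hb))
    rw [neg_div_neg_eq] at h
    convert h using 2 with n
    · funext n
      simp [truncFrullani_neg]
    · simp [map_div₀, map_ofNat]

lemma norm_exp_sub_exp_div_le (a b : ℝ) {k : ℝ} (hk : 0 < k) :
    ‖(exp (I * k * a) - exp (I * k * b)) / (2 * k)‖ ≤ k⁻¹ := by
  have hnum : ‖exp (I * k * a) - exp (I * k * b)‖ ≤ 2 :=
    (norm_sub_le _ _).trans (by rw [norm_exp_I_mul_mul, norm_exp_I_mul_mul]; norm_num)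
  rw [norm_div, norm_mul, RCLike.norm_ofNat, norm_real, Real.norm_of_nonneg hk.le]
  calc _ ≤ 2 / (2 * k) := by gcongr
    _ = k⁻¹ := by field_simp

lemma pos_and_inv_le_of_mem_Ioc {n : ℕ} {k : ℝ} (hk : k ∈ Ioc (n : ℝ)⁻¹ n) : 0 < k ∧ k⁻¹ ≤ n :=
  have hk0 : 0 < k := (inv_nonneg.2 n.cast_nonneg).trans_lt hk.1
  ⟨hk0, (inv_lt_of_inv_lt₀ (hk0.trans_le hk.2) hk.1).le⟩

end Frullani

section Fubini
open Complex

variable {X : Type*} [MeasurableSpace X] {μ : Measure X} {g : X → ℂ} {a b : X → ℝ}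

lemma integrable_prod_mul_exp_sub_exp_div (hg : Integrable g μ) (ha : Measurable a)
    (hb : Measurable b) (n : ℕ) :
    Integrable (Function.uncurry fun (k : ℝ) (p : X) =>
        g p * ((exp (I * k * a p) - exp (I * k * b p)) / (2 * k)))
      ((volume.restrict (Ioc (n : ℝ)⁻¹ n)).prod μ) := by
  refine Integrable.mono' ((integrable_const (n : ℝ)).mul_prod hg.norm)
    (hg.aestronglyMeasurable.comp_snd.mul (Measurable.aestronglyMeasurable (by fun_prop))) ?_
  filter_upwards [Measure.quasiMeasurePreserving_fst.ae (ae_restrict_mem measurableSet_Ioc)]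
    with z hz
  obtain ⟨hk, hkn⟩ := pos_and_inv_le_of_mem_Ioc hz
  rw [Function.uncurry_apply_pair, norm_mul, mul_comm]
  gcongr
  exact (norm_exp_sub_exp_div_le _ _ hk).trans hkn

lemma integral_Ioc_integral_eq_integral_mul_truncFrullani [SFinite μ] (hg : Integrable g μ)
    (ha : Measurable a) (hb : Measurable b) (n : ℕ) :
    ∫ k in Ioc (n : ℝ)⁻¹ n, (∫ p, g p * (exp (I * k * a p) - exp (I * k * b p)) ∂μ) / (2 * k) =
      ∫ p, g p * truncFrullani (a p) (b p) n ∂μ := by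
  simp_rw [← integral_div, mul_div_assoc]
  rw [integral_integral_swap (integrable_prod_mul_exp_sub_exp_div hg ha hb n)]
  simp_rw [integral_const_mul, truncFrullani]

lemma integrable_mul_truncFrullani [SFinite μ] (hg : Integrable g μ) (ha : Measurable a)
    (hb : Measurable b) (n : ℕ) : Integrable (fun p => g p * truncFrullani (a p) (b p) n) μ := by
  simpa only [Function.uncurry_apply_pair, integral_const_mul, truncFrullani] using
    (integrable_prod_mul_exp_sub_exp_div hg ha hb n).integral_prod_right

lemma tendsto_integral_Ioc_integral_exp_sub_exp_div [SFinite μ] (hg : Integrable g μ)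
    (ha : Measurable a) (hb : Measurable b) (hab : ∀ᵐ p ∂μ, 0 < a p * b p)
    (hlog : Integrable (fun p => g p * (Real.log (a p / b p) : ℂ)) μ) :
    Tendsto (fun n : ℕ =>
        ∫ k in Ioc (n : ℝ)⁻¹ n, (∫ p, g p * (exp (I * k * a p) - exp (I * k * b p)) ∂μ) / (2 * k))
      atTop (𝓝 (-(1 / 2) * ∫ p, g p * (Real.log (a p / b p) : ℂ) ∂μ)) := by
  simp_rw [integral_Ioc_integral_eq_integral_mul_truncFrullani hg ha hb]
  have hlim : -(1 / 2) * ∫ p, g p * (Real.log (a p / b p) : ℂ) ∂μ =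
      ∫ p, g p * (-(Real.log (a p / b p) : ℂ) / 2) ∂μ := by
    rw [← integral_const_mul]
    congr 1 with p
    ring
  rw [hlim]
  refine tendsto_integral_of_dominated_convergence _
    (fun n => (integrable_mul_truncFrullani hg ha hb n).aestronglyMeasurable) hlog.norm
    (fun n => ?_) ?_
  · filter_upwards [hab] with p hp
    rw [norm_mul, norm_mul, norm_real, Real.norm_eq_abs]
    gcongr
    exact norm_truncFrullani_le hp n
  · filter_upwards [hab] with p hp
    exact (tendsto_truncFrullani hp).const_mul (g p)

end Fubini

lemma tendsto_setIntegral_Ioc_inv_natCast {E : Type*} [NormedAddCommGroup E] [NormedSpace ℝ E]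
    {f : ℝ → E} (hf : IntegrableOn f (Ioi 0)) :
    Tendsto (fun n : ℕ => ∫ k in Ioc (n : ℝ)⁻¹ n, f k) atTop (𝓝 (∫ k in Ioi 0, f k)) := by
  have hcover : AECover (volume.restrict (Ioi (0 : ℝ))) atTop fun n : ℕ => Ioc (n : ℝ)⁻¹ n :=
    aecover_restrict_of_ae_imp measurableSet_Ioi
      (ae_of_all _ fun k (hk : 0 < k) =>
        ((tendsto_inv_atTop_zero.comp tendsto_natCast_atTop_atTop).eventually
          (eventually_lt_nhds hk)).and (tendsto_natCast_atTop_atTop.eventually_ge_atTop k))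
      fun _ => measurableSet_Ioc
  refine (hcover.integral_tendsto_of_countably_generated hf).congr fun n => ?_
  rw [Measure.restrict_restrict measurableSet_Ioc,
    inter_eq_left.2 (show Ioc (n : ℝ)⁻¹ n ⊆ Ioi 0 from fun _ hk => (pos_and_inv_le_of_mem_Ioc hk).1)]

lemma ae_fst_ne_snd {α : Type*} [MeasurableSpace α] [MeasurableEq α] {μ ν : Measure α}
    [SFinite ν] [NullSingletonClass ν] : ∀ᵐ p ∂μ.prod ν, p.1 ≠ p.2 :=
  (Measure.ae_prod_iff_ae_ae measurableSet_diagonal.compl).2 <|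
    ae_of_all _ fun y => (Measure.ae_ne ν y).mono fun _ h => h.symm

lemma StrictMono.sub_mul_sub_pos {α : Type*} [Ring α] [LinearOrder α] [IsStrictOrderedRing α]
    {f : α → α} (hf : StrictMono f) {y y' : α} (h : y ≠ y') : 0 < (f y - f y') * (y - y') := by
  rcases h.lt_or_gt with h | h
  · exact mul_pos_of_neg_of_neg (sub_neg.2 (hf h)) (sub_neg.2 h)
  · exact mul_pos (sub_pos.2 (hf h)) (sub_pos.2 h)

section Fourier
open Complex

lemma norm_exp_neg_I_mul_mul (k t : ℝ) : ‖exp (-(I * k * t))‖ = 1 := by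
  rw [show -(I * k * t) = I * (-k : ℝ) * t by push_cast; ring, norm_exp_I_mul_mul]

lemma continuous_ft {g : ℝ → ℂ} (hg : Integrable g) : Continuous (ft g) :=
  continuous_const.mul <| continuous_of_dominated
    (fun _ => hg.aestronglyMeasurable.mul (Continuous.aestronglyMeasurable (by fun_prop)))
    (fun k => ae_of_all _ fun t => by rw [norm_mul, norm_exp_neg_I_mul_mul, mul_one])
    hg.norm (ae_of_all _ fun _ => by fun_prop)

lemma ft_mul_ft (g h : ℝ → ℂ) (k k' : ℝ) :
    ft g k * ft h k' = (2 * Real.pi : ℂ)⁻¹ *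
      ((∫ t, g t * exp (-(I * k * t))) * ∫ t, h t * exp (-(I * k' * t))) := by
  have hsq : ((Real.sqrt (2 * Real.pi) : ℝ) : ℂ) ^ 2 = 2 * Real.pi := by
    rw [← ofReal_pow, Real.sq_sqrt (by positivity)]
    push_cast; ring
  have hne : ((Real.sqrt (2 * Real.pi) : ℝ) : ℂ) ≠ 0 := ofReal_ne_zero.2 (by positivity)
  simp only [ft]
  rw [← hsq]
  field_simp

lemma integral_pullback_mul {s : Set ℝ} {x x' : ℝ → ℝ} {f fc : ℝ → ℂ}
    (hderiv : ∀ y, HasDerivAt x (x' y) y) (hx'pos : ∀ y, 0 < x' y) (hbij : BijOn x univ s)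
    (hfc : ∀ y, fc (x y) = f y / (x' y : ℂ)) (hfc0 : ∀ u ∉ s, fc u = 0) (H : ℝ → ℂ) :
    ∫ u, fc u * H u = ∫ y, f y * H (x y) := by
  rw [← setIntegral_eq_integral_of_forall_compl_eq_zero fun u hu => by rw [hfc0 u hu, zero_mul],
    ← hbij.image_eq, integral_image_eq_integral_abs_deriv_smul MeasurableSet.univ
      (fun y _ => (hderiv y).hasDerivWithinAt) hbij.injOn, Measure.restrict_univ]
  refine integral_congr_ae (ae_of_all _ fun y => ?_)
  have hx' : (x' y : ℂ) ≠ 0 := ofReal_ne_zero.2 (hx'pos y).ne'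
  dsimp only
  rw [abs_of_pos (hx'pos y), hfc y, real_smul]
  field_simp

lemma integral_mul_exp_mul_integral_mul_exp (f₁ f₂ : ℝ → ℂ) (w : ℝ → ℝ) (k : ℝ) :
    (∫ y, f₂ y * exp (-(I * k * w y))) * ∫ y, f₁ y * exp (-(I * (-k : ℝ) * w y)) =
      ∫ p : ℝ × ℝ, f₁ p.1 * f₂ p.2 * exp (I * k * (w p.1 - w p.2 : ℝ)) := by
  rw [mul_comm, Measure.volume_eq_prod, ← integral_prod_mul]
  refine integral_congr_ae (ae_of_all _ fun p => ?_)
  dsimp only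
  rw [mul_mul_mul_comm, ← exp_add]
  push_cast
  ring_nf

lemma integrable_mul_exp_I_mul {X : Type*} [MeasurableSpace X] {μ : Measure X} {g : X → ℂ}
    (hg : Integrable g μ) {w : X → ℝ} (hw : Measurable w) (k : ℝ) :
    Integrable (fun p => g p * exp (I * k * w p)) μ :=
  hg.mul_bdd (Measurable.aestronglyMeasurable (by fun_prop))
    (ae_of_all _ fun p => (norm_exp_I_mul_mul k (w p)).le)

/-- Positive frequency of `f₁` kills the contribution of the flat phase `exp (I k (y - y'))`. -/
lemma ft_pullback_mul_ft_pullback_neg {s : Set ℝ} {x x' : ℝ → ℝ} {f₁ f₂ fc₁ fc₂ : ℝ → ℂ}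
    (hderiv : ∀ y, HasDerivAt x (x' y) y) (hx'pos : ∀ y, 0 < x' y) (hbij : BijOn x univ s)
    (hf₁ : Integrable f₁) (hf₂ : Integrable f₂)
    (hfc₁ : ∀ y, fc₁ (x y) = f₁ y / (x' y : ℂ)) (hfc₂ : ∀ y, fc₂ (x y) = f₂ y / (x' y : ℂ))
    (hfc₁0 : ∀ u ∉ s, fc₁ u = 0) (hfc₂0 : ∀ u ∉ s, fc₂ u = 0) {k : ℝ} (hk : ft f₁ (-k) = 0) :
    ft fc₂ k * ft fc₁ (-k) = (2 * Real.pi : ℂ)⁻¹ * ∫ p : ℝ × ℝ, f₁ p.1 * f₂ p.2 *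
      (exp (I * k * (x p.1 - x p.2 : ℝ)) - exp (I * k * (p.1 - p.2 : ℝ))) := by
  have hx : Continuous x := continuous_iff_continuousAt.2 fun y => (hderiv y).continuousAt
  have hcurved := ft_mul_ft fc₂ fc₁ k (-k)
  rw [integral_pullback_mul hderiv hx'pos hbij hfc₂ hfc₂0 fun u => exp (-(I * k * u)),
    integral_pullback_mul hderiv hx'pos hbij hfc₁ hfc₁0 fun u => exp (-(I * (-k : ℝ) * u)),
    integral_mul_exp_mul_integral_mul_exp] at hcurved
  have hflat := ft_mul_ft f₂ f₁ k (-k)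
  rw [hk, mul_zero, integral_mul_exp_mul_integral_mul_exp f₁ f₂ (fun y => y)] at hflat
  have hg : Integrable (fun p : ℝ × ℝ => f₁ p.1 * f₂ p.2) := hf₁.mul_prod hf₂
  rw [← sub_zero (ft fc₂ k * ft fc₁ (-k)), hcurved, hflat, ← mul_sub,
    ← integral_sub (integrable_mul_exp_I_mul hg (w := fun p => x p.1 - x p.2) (by fun_prop) k)
      (integrable_mul_exp_I_mul hg (w := fun p => p.1 - p.2) (by fun_prop) k)]
  simp_rw [mul_sub]

end Fourier

lemma integrableOn_div_two_mul_of_norm_div {F : ℝ → ℂ} (hF : Continuous F)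
    (hA : IntegrableOn (fun k : ℝ => ‖F k‖ / k) (Ioi 0)) :
    IntegrableOn (fun k : ℝ => F k / (2 * k)) (Ioi 0) := by
  refine hA.mono' (hF.measurable.div (by fun_prop)).aestronglyMeasurable ?_
  filter_upwards [ae_restrict_mem measurableSet_Ioi] with k (hk : 0 < k)
  rw [norm_div, norm_mul, RCLike.norm_ofNat, Complex.norm_real, Real.norm_of_nonneg hk.le]
  gcongr
  linarith

theorem stmt2_general
    (I : Set ℝ)
    (x x' : ℝ → ℝ)
    (hderiv : ∀ y : ℝ, HasDerivAt x (x' y) y)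
    (hx'pos : ∀ y : ℝ, 0 < x' y)
    (hmono : StrictMono x)
    (hbij : Set.BijOn x Set.univ I)
    (f₁ f₂ fc₁ fc₂ : ℝ → ℂ)
    (hf₁ : Integrable f₁) (hf₂ : Integrable f₂)
    (hfreq₁ : ∀ k ≤ (0:ℝ), ft f₁ k = 0)
    (hfc₁ : ∀ y : ℝ, fc₁ (x y) = f₁ y / ((x' y : ℝ) : ℂ))
    (hfc₂ : ∀ y : ℝ, fc₂ (x y) = f₂ y / ((x' y : ℝ) : ℂ))
    (hfc₁0 : ∀ u : ℝ, u ∉ I → fc₁ u = 0)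
    (hfc₂0 : ∀ u : ℝ, u ∉ I → fc₂ u = 0)
    (hfc₁int : Integrable fc₁) (hfc₂int : Integrable fc₂)
    (hA : IntegrableOn (fun k : ℝ => ‖ft fc₂ k * ft fc₁ (-k)‖ / k) (Set.Ioi 0))
    (hG : Integrable (fun p : ℝ × ℝ =>
      f₁ p.1 * f₂ p.2 * (Real.log ((x p.1 - x p.2) / (p.1 - p.2)) : ℂ))) :
    ∫ k in Set.Ioi (0:ℝ), ft fc₂ k * ft fc₁ (-k) / (2 * (k : ℂ))
      = -(1 / (4 * (Real.pi : ℂ))) *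
          (∫ p : ℝ × ℝ, f₁ p.1 * (Real.log ((x p.1 - x p.2) / (p.1 - p.2)) : ℂ) * f₂ p.2) := by
  have hx : Continuous x := continuous_iff_continuousAt.2 fun y => (hderiv y).continuousAt
  set Φ : ℝ → ℂ := fun k => ∫ p : ℝ × ℝ, f₁ p.1 * f₂ p.2 *
    (Complex.exp (Complex.I * k * (x p.1 - x p.2 : ℝ)) - Complex.exp (Complex.I * k * (p.1 - p.2 : ℝ)))
  have hrepr : ∀ k ∈ Ioi (0 : ℝ),
      ft fc₂ k * ft fc₁ (-k) / (2 * k) = (2 * Real.pi : ℂ)⁻¹ * (Φ k / (2 * k)) := fun k hk => by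
    rw [ft_pullback_mul_ft_pullback_neg hderiv hx'pos hbij hf₁ hf₂ hfc₁ hfc₂ hfc₁0 hfc₂0
      (hfreq₁ _ (neg_nonpos.2 (le_of_lt hk))), mul_div_assoc]
  have hF : IntegrableOn (fun k : ℝ => ft fc₂ k * ft fc₁ (-k) / (2 * k)) (Ioi 0) :=
    integrableOn_div_two_mul_of_norm_div (F := fun k => ft fc₂ k * ft fc₁ (-k))
      ((continuous_ft hfc₂int).mul ((continuous_ft hfc₁int).comp continuous_neg)) hA
  have hΦ : IntegrableOn (fun k : ℝ => Φ k / (2 * k)) (Ioi 0) := by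
    refine IntegrableOn.congr_fun (hF.const_mul (2 * Real.pi : ℂ)) (fun k hk => ?_) measurableSet_Ioi
    rw [hrepr k hk, ← mul_assoc, mul_inv_cancel₀ (by simp [Real.pi_ne_zero]), one_mul]
  have hlim := tendsto_integral_Ioc_integral_exp_sub_exp_div (hf₁.mul_prod hf₂)
    (by fun_prop) (by fun_prop) (ae_fst_ne_snd.mono fun p => hmono.sub_mul_sub_pos) hG
  rw [setIntegral_congr_fun measurableSet_Ioi hrepr, integral_const_mul,
    tendsto_nhds_unique (tendsto_setIntegral_Ioc_inv_natCast hΦ) hlim, ← mul_assoc]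
  congr 1
  · field_simp
    ring
  · refine integral_congr_ae (ae_of_all _ fun p => ?_)
    ring

theorem stmt2
    (I : Set ℝ) (hIopen : IsOpen I) (hIconn : I.OrdConnected)
    (x x' : ℝ → ℝ)
    (hderiv : ∀ y : ℝ, HasDerivAt x (x' y) y)
    (hx'cont : Continuous x')
    (hx'pos : ∀ y : ℝ, 0 < x' y)
    (hmono : StrictMono x)
    (hbij : Set.BijOn x Set.univ I)
    (f₁ f₂ fc₁ fc₂ : ℝ → ℂ)
    (hf₁ : Integrable f₁) (hf₂ : Integrable f₂)
    (hfreq₁ : ∀ k ≤ (0:ℝ), ft f₁ k = 0) (hfreq₂ : ∀ k ≤ (0:ℝ), ft f₂ k = 0)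
    (hfc₁ : ∀ y : ℝ, fc₁ (x y) = f₁ y / ((x' y : ℝ) : ℂ))
    (hfc₂ : ∀ y : ℝ, fc₂ (x y) = f₂ y / ((x' y : ℝ) : ℂ))
    (hfc₁0 : ∀ u : ℝ, u ∉ I → fc₁ u = 0)
    (hfc₂0 : ∀ u : ℝ, u ∉ I → fc₂ u = 0)
    (hfc₁int : Integrable fc₁) (hfc₂int : Integrable fc₂)
    (hA : IntegrableOn (fun k : ℝ => ‖ft fc₂ k * ft fc₁ (-k)‖ / k) (Set.Ioi 0))
    (hG : Integrable (fun p : ℝ × ℝ =>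
      f₁ p.1 * f₂ p.2 * (Real.log ((x p.1 - x p.2) / (p.1 - p.2)) : ℂ))) :
    ∫ k in Set.Ioi (0:ℝ), ft fc₂ k * ft fc₁ (-k) / (2 * (k : ℂ))
      = -(1 / (4 * (Real.pi : ℂ))) *
          (∫ p : ℝ × ℝ, f₁ p.1 * (Real.log ((x p.1 - x p.2) / (p.1 - p.2)) : ℂ) * f₂ p.2) :=
  stmt2_general I x x' hderiv hx'pos hmono hbij f₁ f₂ fc₁ fc₂ hf₁ hf₂ hfreq₁ hfc₁ hfc₂ hfc₁0 hfc₂0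
    hfc₁int hfc₂int hA hG
end

section
/- (Invariance of the field commutator under a change of coordinates.) Let x : ℝ → I be a C¹ strictly increasing bijection onto an open interval I ⊆ ℝ with x'(y) > 0 for all y, and let f₁, f₂ : ℝ → ℂ be integrable with f̂₁(0) = f̂₂(0) = 0. Assume that the maps k ↦ |f̌₁^(k) f̌₂^(k)|/|k| and p ↦ |f̂₁(p) f̂₂(p)|/|p| are Lebesgue integrable on ℝ. Then ∫_ℝ (dk/(2k)) conj(f̌₂^(k)) f̌₁^(k) = ∫_ℝ (dp/(2p)) conj(f̂₂(p)) f̂₁(p). -/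
/-!
Write both sides through `ftAlong φ g`, the Fourier transform of the push-forward of `g(t) dt`
under `φ`: the change of variables `u = x y` gives `ft fc = ftAlong x f`, and `ft f = ftAlong id f`.
Pairing `k` with `-k` and truncating to `ε < |k| ≤ 1/ε`, Fubini turns the left-hand side into
`(i/2π) ∫∫ conj g₂(y₁) g₁(y₂) ∫_ε^{1/ε} sin (k (φ y₁ - φ y₂)) / k dk`. The inner integral equals
`Si (Δ/ε) - Si (ε Δ)`, which is bounded and tends to `S · sign Δ` with `S = lim_{b→∞} Si b`
(its value `π/2` is never needed), so by dominated convergence the integral depends on `φ` only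
through the order it induces on `ℝ`, which a strictly increasing `x` does not change.
-/

open MeasureTheory

open Filter Topology Set Real ComplexConjugate

noncomputable def sineIntegral (b : ℝ) : ℝ := ∫ t in (0 : ℝ)..b, sinc t

lemma intervalIntegrable_sinc (a b : ℝ) : IntervalIntegrable sinc volume a b :=
  continuous_sinc.intervalIntegrable a b

lemma continuous_sineIntegral : Continuous sineIntegral :=
  intervalIntegral.continuous_primitive intervalIntegrable_sinc 0

lemma sineIntegral_zero : sineIntegral 0 = 0 := intervalIntegral.integral_same

lemma sineIntegral_neg (b : ℝ) : sineIntegral (-b) = -sineIntegral b := by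
  have := intervalIntegral.integral_comp_neg (a := 0) (b := -b) sinc
  simp only [sinc_neg, neg_neg, neg_zero] at this
  rw [sineIntegral, sineIntegral, this, intervalIntegral.integral_symm]

lemma sineIntegral_sub_sineIntegral (a b : ℝ) :
    sineIntegral b - sineIntegral a = ∫ t in a..b, sinc t :=
  intervalIntegral.integral_interval_sub_left (intervalIntegrable_sinc 0 b)
    (intervalIntegrable_sinc 0 a)

lemma integrableOn_cos_div_sq_Ioi_one :
    IntegrableOn (fun t : ℝ => cos t / t ^ 2) (Ioi 1) := by
  refine (integrableOn_Ioi_rpow_of_lt (by norm_num : (-2 : ℝ) < -1) one_pos).mono'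
    ((continuous_cos.measurable.div (measurable_id.pow_const 2)).aestronglyMeasurable) ?_
  refine (ae_restrict_iff' measurableSet_Ioi).2 (Eventually.of_forall fun t (ht : 1 < t) => ?_)
  have ht0 : 0 < t := one_pos.trans ht
  rw [norm_div, norm_pow, Real.norm_of_nonneg ht0.le, rpow_neg ht0.le, rpow_two, ← one_div]
  exact div_le_div_of_nonneg_right (by simpa using abs_cos_le_one t) (by positivity)

lemma sineIntegral_eq_of_one_le {b : ℝ} (hb : 1 ≤ b) :
    sineIntegral b = sineIntegral 1 + cos 1 - cos b / b - ∫ t in (1 : ℝ)..b, cos t / t ^ 2 := by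
  have hpos : ∀ t ∈ uIcc (1 : ℝ) b, 0 < t := fun t ht =>
    one_pos.trans_le (by simpa [hb] using ht.1)
  have parts := intervalIntegral.integral_mul_deriv_eq_deriv_mul
    (u := fun t => t⁻¹) (u' := fun t => -(t ^ 2)⁻¹) (v := fun t => -cos t) (v' := sin)
    (fun t ht => hasDerivAt_inv (hpos t ht).ne')
    (fun t _ => by simpa only [neg_neg] using (hasDerivAt_cos t).fun_neg)
    ((continuousOn_inv₀.comp (continuousOn_pow 2) fun t ht => (pow_pos (hpos t ht) 2).ne').neg
      |>.intervalIntegrable)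
    (continuous_sin.intervalIntegrable 1 b)
  have hsinc : (∫ t in (1 : ℝ)..b, sinc t) = ∫ t in (1 : ℝ)..b, t⁻¹ * sin t :=
    intervalIntegral.integral_congr fun t ht => by
      rw [sinc_of_ne_zero (hpos t ht).ne', inv_mul_eq_div]
  rw [sub_eq_iff_eq_add'.1 (sineIntegral_sub_sineIntegral 1 b), hsinc, parts]
  simp only [neg_mul_neg, inv_mul_eq_div]
  ring

lemma exists_tendsto_sineIntegral_atTop : ∃ S, Tendsto sineIntegral atTop (𝓝 S) := by
  refine ⟨sineIntegral 1 + cos 1 - 0 - ∫ t in Ioi (1 : ℝ), cos t / t ^ 2, ?_⟩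
  have hcos : Tendsto (fun b : ℝ => cos b / b) atTop (𝓝 0) := by
    refine squeeze_zero_norm' ?_ tendsto_inv_atTop_zero
    filter_upwards [eventually_gt_atTop 0] with b hb
    rw [norm_div, Real.norm_of_nonneg hb.le, div_eq_mul_inv]
    exact mul_le_of_le_one_left (inv_nonneg.2 hb.le) (by simpa using abs_cos_le_one b)
  refine ((tendsto_const_nhds.sub hcos).sub (intervalIntegral_tendsto_integral_Ioi 1
    integrableOn_cos_div_sq_Ioi_one tendsto_id)).congr' ?_
  filter_upwards [eventually_ge_atTop 1] with b hb
  exact (sineIntegral_eq_of_one_le hb).symm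

lemma tendsto_sineIntegral_atBot {S : ℝ} (hS : Tendsto sineIntegral atTop (𝓝 S)) :
    Tendsto sineIntegral atBot (𝓝 (-S)) := by
  have := hS.neg.comp tendsto_neg_atBot_atTop
  refine this.congr fun b => ?_
  simp [sineIntegral_neg]

lemma exists_abs_sineIntegral_le {S : ℝ} (hS : Tendsto sineIntegral atTop (𝓝 S)) :
    ∃ C, ∀ b, |sineIntegral b| ≤ C := by
  obtain ⟨M, hM⟩ := eventually_atTop.1 (hS.abs.eventually (eventually_le_nhds (lt_add_one |S|)))
  obtain ⟨C, hC⟩ := (isCompact_Icc (a := 0) (b := M)).exists_bound_of_continuousOn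
    continuous_sineIntegral.continuousOn
  refine ⟨max C (|S| + 1), fun b => ?_⟩
  wlog hb : 0 ≤ b generalizing b
  · simpa [sineIntegral_neg] using this (-b) (by linarith)
  rcases le_total b M with h | h
  · exact (hC b ⟨hb, h⟩).trans (le_max_left _ _)
  · exact (hM b h).trans (le_max_right _ _)

noncomputable def sineKernel (ε Δ : ℝ) : ℝ := ∫ k in Ioc ε ε⁻¹, sin (k * Δ) / k

lemma integral_Ioc_sin_mul_div_eq {a b : ℝ} (ha : 0 < a) (hab : a ≤ b) (Δ : ℝ) :
    ∫ k in Ioc a b, sin (k * Δ) / k = sineIntegral (b * Δ) - sineIntegral (a * Δ) := by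
  have hsinc : ∀ k ∈ uIcc a b, sin (k * Δ) / k = Δ * sinc (k * Δ) := fun k hk => by
    have hk : k ≠ 0 := (ha.trans_le (by simpa [hab] using hk.1)).ne'
    rcases eq_or_ne Δ 0 with rfl | hΔ
    · simp
    · rw [sinc_of_ne_zero (mul_ne_zero hk hΔ)]
      field_simp
  rw [← intervalIntegral.integral_of_le hab, intervalIntegral.integral_congr hsinc,
    intervalIntegral.integral_const_mul, ← smul_eq_mul,
    intervalIntegral.smul_integral_comp_mul_right, sineIntegral_sub_sineIntegral]

lemma eventually_sineKernel_eq : ∀ᶠ ε in 𝓝[>] (0 : ℝ), ∀ Δ,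
    sineKernel ε Δ = sineIntegral (ε⁻¹ * Δ) - sineIntegral (ε * Δ) := by
  filter_upwards [self_mem_nhdsWithin, nhdsWithin_le_nhds (Iic_mem_nhds one_pos)] with ε hε hε₁
  exact integral_Ioc_sin_mul_div_eq hε (hε₁.trans (one_le_inv₀ hε |>.2 hε₁))

lemma tendsto_sineKernel {S : ℝ} (hS : Tendsto sineIntegral atTop (𝓝 S)) (Δ : ℝ) :
    Tendsto (fun ε => sineKernel ε Δ) (𝓝[>] 0) (𝓝 (S * sign Δ)) := by
  have hlow : Tendsto (fun ε => sineIntegral (ε * Δ)) (𝓝[>] 0) (𝓝 0) := by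
    have := (continuous_sineIntegral.comp (continuous_mul_const Δ)).tendsto 0
    rw [Function.comp_apply, zero_mul, sineIntegral_zero] at this
    exact this.mono_left nhdsWithin_le_nhds
  have hhigh : Tendsto (fun ε => sineIntegral (ε⁻¹ * Δ)) (𝓝[>] 0) (𝓝 (S * sign Δ)) := by
    rcases lt_trichotomy Δ 0 with hΔ | rfl | hΔ
    · rw [sign_of_neg hΔ, mul_neg_one]
      exact (tendsto_sineIntegral_atBot hS).comp
        (tendsto_inv_nhdsGT_zero.atTop_mul_const_of_neg hΔ)
    · simp [sineIntegral_zero]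
    · rw [sign_of_pos hΔ, mul_one]
      exact hS.comp (tendsto_inv_nhdsGT_zero.atTop_mul_const hΔ)
  simpa using (hhigh.sub hlow).congr' (eventually_sineKernel_eq.mono fun ε h => (h Δ).symm)

lemma abs_sineKernel_le {C : ℝ} (hC : ∀ b, |sineIntegral b| ≤ C) :
    ∀ᶠ ε in 𝓝[>] (0 : ℝ), ∀ Δ, |sineKernel ε Δ| ≤ 2 * C := by
  filter_upwards [eventually_sineKernel_eq] with ε h Δ
  rw [h]
  linarith [abs_sub (sineIntegral (ε⁻¹ * Δ)) (sineIntegral (ε * Δ)), hC (ε⁻¹ * Δ), hC (ε * Δ)]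

section Kernel

variable {α : Type*} [MeasurableSpace α] {μ : Measure α} {F : α → ℂ} {Δ : α → ℝ}

lemma integral_Ioc_integral_mul_sin_div [SFinite μ] (hF : Integrable F μ) (hΔ : Measurable Δ)
    {ε : ℝ} (hε : 0 < ε) :
    ∫ k in Ioc ε ε⁻¹, ∫ p, F p * ((sin (k * Δ p) / k : ℝ) : ℂ) ∂μ
      = ∫ p, F p * (sineKernel ε (Δ p) : ℂ) ∂μ := by
  have hbound : ∀ k ∈ Ioc ε ε⁻¹, ∀ p, ‖F p * ((sin (k * Δ p) / k : ℝ) : ℂ)‖ ≤ ε⁻¹ * ‖F p‖ :=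
    fun k hk p => by
      have hk0 : 0 < k := hε.trans hk.1
      rw [norm_mul, Complex.norm_real, norm_div, Real.norm_of_nonneg hk0.le, mul_comm]
      refine mul_le_mul_of_nonneg_right ?_ (norm_nonneg _)
      calc ‖sin (k * Δ p)‖ / k ≤ 1 / k := by gcongr; simpa using abs_sin_le_one _
        _ ≤ ε⁻¹ := by rw [one_div]; exact inv_anti₀ hε hk.1.le
  have hint : Integrable (Function.uncurry fun k p => F p * ((sin (k * Δ p) / k : ℝ) : ℂ))
      ((volume.restrict (Ioc ε ε⁻¹)).prod μ) := by
    refine ((integrable_const ε⁻¹).mul_prod hF.norm).mono' ?_ ?_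
    · refine hF.1.comp_snd.mul (Complex.measurable_ofReal.comp ?_).aestronglyMeasurable
      exact (continuous_sin.measurable.comp (measurable_fst.mul (hΔ.comp measurable_snd))).div
        measurable_fst
    · rw [Measure.restrict_prod_eq_prod_univ, ae_restrict_iff' (measurableSet_Ioc.prod .univ)]
      exact Eventually.of_forall fun w hw => hbound w.1 hw.1 w.2
  rw [integral_integral_swap hint]
  congr 1 with p
  rw [integral_const_mul, sineKernel, integral_complex_ofReal]

lemma tendsto_integral_mul_sineKernel (hF : Integrable F μ) (hΔ : Measurable Δ) {S : ℝ}
    (hS : Tendsto sineIntegral atTop (𝓝 S)) :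
    Tendsto (fun ε => ∫ p, F p * (sineKernel ε (Δ p) : ℂ) ∂μ) (𝓝[>] 0)
      (𝓝 (∫ p, F p * ((S * sign (Δ p) : ℝ) : ℂ) ∂μ)) := by
  obtain ⟨C, hC⟩ := exists_abs_sineIntegral_le hS
  refine tendsto_integral_filter_of_dominated_convergence (fun p => 2 * C * ‖F p‖) ?_ ?_
    (hF.norm.const_mul _) (ae_of_all _ fun p => ?_)
  · filter_upwards [eventually_sineKernel_eq] with ε h
    simp_rw [h]
    refine hF.1.mul (Complex.measurable_ofReal.comp ?_).aestronglyMeasurable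
    exact (continuous_sineIntegral.measurable.comp (hΔ.const_mul _)).sub
      (continuous_sineIntegral.measurable.comp (hΔ.const_mul _))
  · filter_upwards [abs_sineKernel_le hC] with ε h
    refine ae_of_all _ fun p => ?_
    rw [norm_mul, Complex.norm_real, Real.norm_eq_abs, mul_comm]
    exact mul_le_mul_of_nonneg_right (h _) (norm_nonneg _)
  · exact tendsto_const_nhds.mul ((Complex.continuous_ofReal.tendsto _).comp
      (tendsto_sineKernel hS (Δ p)))

end Kernel

lemma tendsto_integral_Ioc_add_comp_neg {E : Type*} [NormedAddCommGroup E] [NormedSpace ℝ E]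
    {H : ℝ → E} (hH : Integrable H) :
    Tendsto (fun ε => ∫ k in Ioc ε ε⁻¹, (H k + H (-k))) (𝓝[>] 0) (𝓝 (∫ k, H k)) := by
  have hcover : AECover (volume.restrict (Ioi 0)) (𝓝[>] (0 : ℝ)) fun ε => Ioc ε ε⁻¹ :=
    (aecover_Ioi_of_Ioi (tendsto_id.mono_left nhdsWithin_le_nhds)).inter
      ((aecover_Iic tendsto_inv_nhdsGT_zero).mono Measure.restrict_le_self)
  have hsymm : ∫ k, H k = ∫ k in Ioi 0, (H k + H (-k)) := by
    rw [integral_add hH.integrableOn hH.comp_neg.integrableOn, integral_comp_neg_Ioi, neg_zero,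
      add_comm, intervalIntegral.integral_Iic_add_Ioi hH.integrableOn hH.integrableOn]
  rw [hsymm]
  refine (hcover.integral_tendsto_of_countably_generated
    (hH.add hH.comp_neg).integrableOn).congr' ?_
  filter_upwards [self_mem_nhdsWithin] with ε (hε : 0 < ε)
  rw [Measure.restrict_restrict measurableSet_Ioc, Ioc_inter_Ioi, max_eq_left hε.le]
  rfl

lemma exp_div_add_exp_neg_div (k Δ : ℝ) :
    Complex.exp (Complex.I * k * Δ) / (2 * k)
      + Complex.exp (Complex.I * ((-k : ℝ) : ℂ) * Δ) / (2 * ((-k : ℝ) : ℂ))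
      = Complex.I * ((sin (k * Δ) / k : ℝ) : ℂ) := by
  rcases eq_or_ne k 0 with rfl | hk
  · simp
  have hplus : Complex.exp (Complex.I * k * Δ)
      = Complex.cos (k * Δ) + Complex.sin (k * Δ) * Complex.I := by
    rw [← Complex.exp_mul_I]; ring_nf
  have hminus : Complex.exp (Complex.I * ((-k : ℝ) : ℂ) * Δ)
      = Complex.cos (k * Δ) - Complex.sin (k * Δ) * Complex.I := by
    rw [show Complex.I * ((-k : ℝ) : ℂ) * Δ = -(k * Δ) * Complex.I by push_cast; ring,
      Complex.exp_mul_I, Complex.cos_neg, Complex.sin_neg]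
    ring
  rw [hplus, hminus]
  push_cast
  field_simp
  ring_nf

noncomputable def ftAlong (φ : ℝ → ℝ) (g : ℝ → ℂ) (k : ℝ) : ℂ :=
  (1 / Real.sqrt (2 * Real.pi)) * ∫ t : ℝ, g t * Complex.exp (-(Complex.I * k * (φ t : ℂ)))

lemma ft_eq_ftAlong_id : ft = ftAlong id := rfl

section FtAlong

variable {φ : ℝ → ℝ} {g g₁ g₂ : ℝ → ℂ}

lemma norm_exp_I_mul_mul_s4 (k t : ℝ) : ‖Complex.exp (Complex.I * k * t)‖ = 1 := by
  rw [show Complex.I * k * t = ((k * t : ℝ) : ℂ) * Complex.I by push_cast; ring]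
  exact Complex.norm_exp_ofReal_mul_I _

lemma continuous_ftAlong (hφ : Measurable φ) (hg : Integrable g) : Continuous (ftAlong φ g) := by
  refine continuous_const.mul (continuous_of_dominated (bound := fun t => ‖g t‖) (fun k => ?_)
    (fun k => ae_of_all _ fun t => ?_) hg.norm (ae_of_all _ fun t => by fun_prop))
  · exact hg.1.mul (Measurable.aestronglyMeasurable (by fun_prop))
  · rw [norm_mul, ← mul_neg, ← Complex.ofReal_neg, norm_exp_I_mul_mul_s4, mul_one]

lemma conj_ftAlong_mul_ftAlong (φ : ℝ → ℝ) (g₁ g₂ : ℝ → ℂ) (k : ℝ) :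
    conj (ftAlong φ g₂ k) * ftAlong φ g₁ k
      = (2 * π : ℂ)⁻¹ * ∫ p : ℝ × ℝ,
          conj (g₂ p.1) * g₁ p.2 * Complex.exp (Complex.I * k * ((φ p.1 - φ p.2 : ℝ) : ℂ)) := by
  have hc : conj (1 / (√(2 * π) : ℂ)) * (1 / (√(2 * π) : ℂ)) = (2 * π : ℂ)⁻¹ := by
    rw [map_div₀, map_one, Complex.conj_ofReal, div_mul_div_comm, one_mul, ← Complex.ofReal_mul,
      mul_self_sqrt (by positivity), one_div]
    push_cast; rfl
  have hconj : conj (∫ t : ℝ, g₂ t * Complex.exp (-(Complex.I * k * (φ t : ℂ))))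
      = ∫ t : ℝ, conj (g₂ t) * Complex.exp (Complex.I * k * (φ t : ℂ)) := by
    rw [← integral_conj]
    congr 1 with t
    rw [map_mul, ← Complex.exp_conj]
    simp
  rw [ftAlong, ftAlong, map_mul, mul_mul_mul_comm, hc, hconj, ← integral_prod_mul,
    Measure.volume_eq_prod]
  congr 2 with p
  rw [Complex.ofReal_sub, mul_sub, sub_eq_add_neg, Complex.exp_add]
  ring

lemma integrable_conj_mul_prod (hg₁ : Integrable g₁) (hg₂ : Integrable g₂) :
    Integrable fun p : ℝ × ℝ => conj (g₂ p.1) * g₁ p.2 := by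
  rw [Measure.volume_eq_prod]
  exact (Complex.conjCLE.toContinuousLinearMap.integrable_comp hg₂).mul_prod hg₁

lemma integrable_conj_ftAlong_mul_div (hφ : Measurable φ) (hg₁ : Integrable g₁)
    (hg₂ : Integrable g₂) (hint : Integrable fun k => ‖ftAlong φ g₁ k * ftAlong φ g₂ k‖ / |k|) :
    Integrable fun k : ℝ => conj (ftAlong φ g₂ k) * ftAlong φ g₁ k / (2 * k) := by
  refine hint.mono' ?_ (ae_of_all _ fun k => ?_)
  · exact (((continuous_ftAlong hφ hg₂).star.mul (continuous_ftAlong hφ hg₁)).measurable.div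
      (by fun_prop : Measurable fun k : ℝ => 2 * (k : ℂ))).aestronglyMeasurable
  · rw [norm_div, norm_mul, Complex.norm_conj, norm_mul, Complex.norm_real, Real.norm_eq_abs,
      Complex.norm_ofNat, mul_comm ‖ftAlong φ g₂ k‖, mul_comm (2 : ℝ) |k|, ← div_div, ← norm_mul]
    exact div_le_self (by positivity) one_le_two

lemma conj_ftAlong_mul_div_add_neg (hφ : Measurable φ) (hg₁ : Integrable g₁)
    (hg₂ : Integrable g₂) (k : ℝ) :
    conj (ftAlong φ g₂ k) * ftAlong φ g₁ k / (2 * k)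
        + conj (ftAlong φ g₂ (-k)) * ftAlong φ g₁ (-k) / (2 * ((-k : ℝ) : ℂ))
      = (2 * π : ℂ)⁻¹ * Complex.I * ∫ p : ℝ × ℝ,
          conj (g₂ p.1) * g₁ p.2 * ((sin (k * (φ p.1 - φ p.2)) / k : ℝ) : ℂ) := by
  have hexp : ∀ c : ℝ, Integrable fun p : ℝ × ℝ =>
      conj (g₂ p.1) * g₁ p.2 * Complex.exp (Complex.I * c * ((φ p.1 - φ p.2 : ℝ) : ℂ)) / (2 * c) :=
    fun c => ((integrable_conj_mul_prod hg₁ hg₂).mul_bdd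
      (Measurable.aestronglyMeasurable (by fun_prop))
      (ae_of_all _ fun p => (norm_exp_I_mul_mul_s4 _ _).le)).div_const _
  rw [conj_ftAlong_mul_ftAlong, conj_ftAlong_mul_ftAlong, mul_div_assoc, mul_div_assoc,
    ← integral_div, ← integral_div, ← mul_add, ← integral_add (hexp k) (hexp (-k)), mul_assoc]
  congr 1
  rw [← integral_const_mul]
  congr 1 with p
  rw [mul_div_assoc, mul_div_assoc, ← mul_add, exp_div_add_exp_neg_div]
  ring

end FtAlong

theorem integral_conj_ftAlong_mul_div {φ : ℝ → ℝ} {g₁ g₂ : ℝ → ℂ} (hφ : Measurable φ)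
    (hg₁ : Integrable g₁) (hg₂ : Integrable g₂)
    (hint : Integrable fun k => ‖ftAlong φ g₁ k * ftAlong φ g₂ k‖ / |k|) {S : ℝ}
    (hS : Tendsto sineIntegral atTop (𝓝 S)) :
    ∫ k : ℝ, conj (ftAlong φ g₂ k) * ftAlong φ g₁ k / (2 * k)
      = (2 * π : ℂ)⁻¹ * Complex.I * ∫ p : ℝ × ℝ,
          conj (g₂ p.1) * g₁ p.2 * ((S * sign (φ p.1 - φ p.2) : ℝ) : ℂ) := by
  have hF := integrable_conj_mul_prod hg₁ hg₂
  have hΔ : Measurable fun p : ℝ × ℝ => φ p.1 - φ p.2 := by fun_prop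
  refine tendsto_nhds_unique
    (tendsto_integral_Ioc_add_comp_neg (integrable_conj_ftAlong_mul_div hφ hg₁ hg₂ hint))
    (((tendsto_integral_mul_sineKernel hF hΔ hS).const_mul _).congr' ?_)
  filter_upwards [self_mem_nhdsWithin] with ε hε
  simp_rw [conj_ftAlong_mul_div_add_neg hφ hg₁ hg₂]
  rw [integral_const_mul, integral_Ioc_integral_mul_sin_div hF hΔ hε]

lemma ft_eq_ftAlong_of_pullback {I : Set ℝ} {x x' : ℝ → ℝ}
    (hderiv : ∀ y, HasDerivAt x (x' y) y) (hx' : ∀ y, 0 < x' y) (hbij : BijOn x univ I)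
    {f fc : ℝ → ℂ} (hfc : ∀ y, fc (x y) = f y / x' y) (hfc0 : ∀ u ∉ I, fc u = 0) :
    ft fc = ftAlong x f := by
  ext k
  rw [ft, ftAlong, ← setIntegral_eq_integral_of_forall_compl_eq_zero fun u hu => by
      rw [hfc0 u hu, zero_mul], ← hbij.image_eq,
    integral_image_eq_integral_abs_deriv_smul MeasurableSet.univ
      (fun y _ => (hderiv y).hasDerivWithinAt) hbij.injOn, setIntegral_univ]
  congr 2 with y
  have hne : (x' y : ℂ) ≠ 0 := Complex.ofReal_ne_zero.2 (hx' y).ne'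
  rw [abs_of_pos (hx' y), hfc y, Complex.real_smul]
  field_simp

lemma StrictMono.sign_sub {f : ℝ → ℝ} (hf : StrictMono f) (a b : ℝ) :
    sign (f a - f b) = sign (a - b) := by
  rcases lt_trichotomy a b with h | rfl | h
  · rw [sign_of_neg (sub_neg.2 (hf h)), sign_of_neg (sub_neg.2 h)]
  · simp
  · rw [sign_of_pos (sub_pos.2 (hf h)), sign_of_pos (sub_pos.2 h)]

theorem stmt4_general
    (I : Set ℝ)
    (x x' : ℝ → ℝ)
    (hderiv : ∀ y : ℝ, HasDerivAt x (x' y) y)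
    (hx'pos : ∀ y : ℝ, 0 < x' y)
    (hmono : StrictMono x)
    (hbij : Set.BijOn x Set.univ I)
    (f₁ f₂ fc₁ fc₂ : ℝ → ℂ)
    (hf₁ : Integrable f₁) (hf₂ : Integrable f₂)
    (hfc₁ : ∀ y : ℝ, fc₁ (x y) = f₁ y / ((x' y : ℝ) : ℂ))
    (hfc₂ : ∀ y : ℝ, fc₂ (x y) = f₂ y / ((x' y : ℝ) : ℂ))
    (hfc₁0 : ∀ u : ℝ, u ∉ I → fc₁ u = 0)
    (hfc₂0 : ∀ u : ℝ, u ∉ I → fc₂ u = 0)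
    (hA : Integrable (fun k : ℝ => ‖ft fc₁ k * ft fc₂ k‖ / |k|))
    (hB : Integrable (fun p : ℝ => ‖ft f₁ p * ft f₂ p‖ / |p|)) :
    ∫ k : ℝ, (starRingEnd ℂ) (ft fc₂ k) * ft fc₁ k / (2 * (k : ℂ))
      = ∫ p : ℝ, (starRingEnd ℂ) (ft f₂ p) * ft f₁ p / (2 * (p : ℂ)) := by
  obtain ⟨S, hS⟩ := exists_tendsto_sineIntegral_atTop
  rw [ft_eq_ftAlong_of_pullback hderiv hx'pos hbij hfc₁ hfc₁0,
    ft_eq_ftAlong_of_pullback hderiv hx'pos hbij hfc₂ hfc₂0] at hA ⊢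
  rw [ft_eq_ftAlong_id] at hB ⊢
  rw [integral_conj_ftAlong_mul_div hmono.monotone.measurable hf₁ hf₂ hA hS,
    integral_conj_ftAlong_mul_div measurable_id hf₁ hf₂ hB hS]
  simp only [hmono.sign_sub, id]

theorem stmt4
    (I : Set ℝ) (hIopen : IsOpen I) (hIconn : I.OrdConnected)
    (x x' : ℝ → ℝ)
    (hderiv : ∀ y : ℝ, HasDerivAt x (x' y) y)
    (hx'cont : Continuous x')
    (hx'pos : ∀ y : ℝ, 0 < x' y)
    (hmono : StrictMono x)
    (hbij : Set.BijOn x Set.univ I)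
    (f₁ f₂ fc₁ fc₂ : ℝ → ℂ)
    (hf₁ : Integrable f₁) (hf₂ : Integrable f₂)
    (hfreq₁ : ft f₁ 0 = 0) (hfreq₂ : ft f₂ 0 = 0)
    (hfc₁ : ∀ y : ℝ, fc₁ (x y) = f₁ y / ((x' y : ℝ) : ℂ))
    (hfc₂ : ∀ y : ℝ, fc₂ (x y) = f₂ y / ((x' y : ℝ) : ℂ))
    (hfc₁0 : ∀ u : ℝ, u ∉ I → fc₁ u = 0)
    (hfc₂0 : ∀ u : ℝ, u ∉ I → fc₂ u = 0)
    (hfc₁int : Integrable fc₁) (hfc₂int : Integrable fc₂)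
    (hA : Integrable (fun k : ℝ => ‖ft fc₁ k * ft fc₂ k‖ / |k|))
    (hB : Integrable (fun p : ℝ => ‖ft f₁ p * ft f₂ p‖ / |p|)) :
    ∫ k : ℝ, (starRingEnd ℂ) (ft fc₂ k) * ft fc₁ k / (2 * (k : ℂ))
      = ∫ p : ℝ, (starRingEnd ℂ) (ft f₂ p) * ft f₁ p / (2 * (p : ℂ)) :=
  stmt4_general I x x' hderiv hx'pos hmono hbij f₁ f₂ fc₁ fc₂ hf₁ hf₂ hfc₁ hfc₂ hfc₁0 hfc₂0 hA hB
end

section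
/- (Schwarzian-derivative limit for the energy-momentum tensor.) Let x be a real-valued function that is three times continuously differentiable on a neighborhood of y ∈ ℝ with x'(y) ≠ 0. Then the limit lim_{ε→0} [ x'(y+ε)·x'(y)/(x(y+ε)−x(y))² − 1/ε² ] exists and equals (1/6)·S{x}(y), where S{x}(y) = x'''(y)/x'(y) − (3/2)·(x''(y)/x'(y))² is the Schwarzian derivative of x at y. -/
/-!
Write `a, b, c` for the first three derivatives of `x` at `y` and `Δ ε = x (y + ε) - x y`.
Taylor's theorem gives `Δ ε = ε D` with `D = a + b ε / 2 + c ε² / 6 + o(ε²)` and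
`x' (y + ε) = a + b ε + c ε² / 2 + o(ε²)`, so the expression equals
`(a x' (y + ε) - D²) / (ε² D²)`. In the numerator the terms of order `1` and `ε` cancel and the
`ε²` coefficient is `a c / 6 - b² / 4`, so the limit is `(a c / 6 - b² / 4) / a² = S{x}(y) / 6`.
-/

open Filter Asymptotics Topology
open scoped Nat

theorem ContDiffAt.isLittleO_taylor {E : Type*} [NormedAddCommGroup E] [NormedSpace ℝ E]
    {f : ℝ → E} {x₀ : ℝ} {n : ℕ} (hf : ContDiffAt ℝ n f x₀) :
    (fun h ↦ f (x₀ + h) - ∑ k ∈ Finset.range (n + 1), ((k ! : ℝ)⁻¹ * h ^ k) • deriv^[k] f x₀)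
      =o[𝓝 0] fun h ↦ h ^ n := by
  obtain ⟨u, hu, hfu⟩ := hf.contDiffOn le_rfl (by simp)
  obtain ⟨δ, hδ, hball⟩ := Metric.mem_nhds_iff.1 hu
  have htaylor := taylor_isLittleO (convex_ball x₀ δ) (Metric.mem_ball_self hδ) (hfu.mono hball)
  rw [Metric.isOpen_ball.nhdsWithin_eq (Metric.mem_ball_self hδ)] at htaylor
  have hshift : Tendsto (x₀ + ·) (𝓝 0) (𝓝 x₀) := by
    simpa using (continuous_const_add x₀).tendsto 0
  refine ((htaylor.comp_tendsto hshift).congr_right fun h ↦ ?_).congr_left fun h ↦ ?_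
  · simp
  · simp only [Function.comp_apply, taylor_within_apply, add_sub_cancel_left,
      iteratedDerivWithin_of_isOpen_eq_iterate Metric.isOpen_ball (Metric.mem_ball_self hδ)]

theorem mul_div_sq_sub_one_div_sq_eq {a b c r s ε : ℝ} (hε : ε ≠ 0)
    (hD : a + b / 2 * ε + c / 6 * ε ^ 2 + r * ε ^ 2 ≠ 0) :
    (a + b * ε + c / 2 * ε ^ 2 + s * ε ^ 2) * a
        / (ε * (a + b / 2 * ε + c / 6 * ε ^ 2 + r * ε ^ 2)) ^ 2 - 1 / ε ^ 2
      = (a * c / 6 - b ^ 2 / 4 + a * s - 2 * a * r - b * (c / 6 + r) * ε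
          - (c / 6 + r) ^ 2 * ε ^ 2) / (a + b / 2 * ε + c / 6 * ε ^ 2 + r * ε ^ 2) ^ 2 := by
  have hε2 : ε ^ 2 ≠ 0 := pow_ne_zero 2 hε
  have hD2 := pow_ne_zero 2 hD
  rw [mul_pow, div_sub_div _ _ (mul_ne_zero hε2 hD2) hε2,
    div_eq_div_iff (mul_ne_zero (mul_ne_zero hε2 hD2) hε2) hD2]
  ring

theorem tendsto_mul_div_sq_sub_one_div_sq {F G : ℝ → ℝ} {a b c : ℝ} (ha : a ≠ 0)
    (hF : (fun ε ↦ F ε - (a * ε + b / 2 * ε ^ 2 + c / 6 * ε ^ 3)) =o[𝓝 0] fun ε ↦ ε ^ 3)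
    (hG : (fun ε ↦ G ε - (a + b * ε + c / 2 * ε ^ 2)) =o[𝓝 0] fun ε ↦ ε ^ 2) :
    Tendsto (fun ε ↦ G ε * a / F ε ^ 2 - 1 / ε ^ 2) (𝓝[≠] 0)
      (𝓝 ((a * c / 6 - b ^ 2 / 4) / a ^ 2)) := by
  set R := fun ε ↦ (F ε - (a * ε + b / 2 * ε ^ 2 + c / 6 * ε ^ 3)) / ε ^ 3
  set S := fun ε ↦ (G ε - (a + b * ε + c / 2 * ε ^ 2)) / ε ^ 2
  have hRS : Tendsto (fun ε ↦ (ε, R ε, S ε)) (𝓝[≠] 0) (𝓝 (0, 0, 0)) :=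
    (tendsto_id.mono_left nhdsWithin_le_nhds).prodMk_nhds
      ((hF.tendsto_div_nhds_zero.mono_left nhdsWithin_le_nhds).prodMk_nhds
        (hG.tendsto_div_nhds_zero.mono_left nhdsWithin_le_nhds))
  have hD : Tendsto (fun ε ↦ a + b / 2 * ε + c / 6 * ε ^ 2 + R ε * ε ^ 2) (𝓝[≠] 0) (𝓝 a) := by
    simpa [Function.comp_def] using ((by fun_prop : Continuous fun p : ℝ × ℝ × ℝ ↦
      a + b / 2 * p.1 + c / 6 * p.1 ^ 2 + p.2.1 * p.1 ^ 2).tendsto _).comp hRS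
  have hN : Tendsto (fun ε ↦ a * c / 6 - b ^ 2 / 4 + a * S ε - 2 * a * R ε
      - b * (c / 6 + R ε) * ε - (c / 6 + R ε) ^ 2 * ε ^ 2) (𝓝[≠] 0)
      (𝓝 (a * c / 6 - b ^ 2 / 4)) := by
    simpa [Function.comp_def] using ((by fun_prop : Continuous fun p : ℝ × ℝ × ℝ ↦
      a * c / 6 - b ^ 2 / 4 + a * p.2.2 - 2 * a * p.2.1 - b * (c / 6 + p.2.1) * p.1
        - (c / 6 + p.2.1) ^ 2 * p.1 ^ 2).tendsto _).comp hRS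
  refine (hN.div (hD.pow 2) (pow_ne_zero 2 ha)).congr' ?_
  filter_upwards [hD.eventually_ne ha, self_mem_nhdsWithin] with ε hDε (hε : ε ≠ 0)
  have hFε : F ε = ε * (a + b / 2 * ε + c / 6 * ε ^ 2 + R ε * ε ^ 2) := by
    simp only [R]; field_simp; ring
  have hGε : G ε = a + b * ε + c / 2 * ε ^ 2 + S ε * ε ^ 2 := by
    simp only [S]; field_simp; ring
  rw [hFε, hGε]
  exact (mul_div_sq_sub_one_div_sq_eq hε hDε).symm

theorem stmt7 (x : ℝ → ℝ) (y : ℝ)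
    (hx : ContDiffAt ℝ 3 x y) (hx' : deriv x y ≠ 0) :
    Filter.Tendsto
      (fun ε : ℝ =>
        deriv x (y + ε) * deriv x y / (x (y + ε) - x y) ^ 2 - 1 / ε ^ 2)
      (nhdsWithin 0 {(0:ℝ)}ᶜ)
      (nhds ((1 / 6) *
        (deriv (deriv (deriv x)) y / deriv x y
          - (3 / 2) * (deriv (deriv x) y / deriv x y) ^ 2))) := by
  have hTaylor := hx.isLittleO_taylor
  have hTaylor' := (hx.derivWithin (m := 2) le_rfl).isLittleO_taylor
  simp only [Finset.sum_range_succ, Finset.sum_range_zero, Function.iterate_succ,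
    Function.comp_apply, Function.iterate_zero, id_eq, Nat.factorial, smul_eq_mul] at hTaylor hTaylor'
  push_cast at hTaylor hTaylor'
  convert tendsto_mul_div_sq_sub_one_div_sq (F := fun ε ↦ x (y + ε) - x y)
    (b := deriv (deriv x) y) (c := deriv (deriv (deriv x)) y) hx'
    (hTaylor.congr_left fun ε ↦ ?_) (hTaylor'.congr_left fun ε ↦ ?_) using 2
  · field_simp
    ring
  · ring
  · ring
end

section
/- (Vanishing of the anomalous pair kernel for the black hole transformation.) Fix M > 0 and let f₁, f₂ : ℝ → ℂ be Schwartz functions with f̂₁(k) = f̂₂(k) = 0 for all k ≤ 0. Then ∬_{ℝ²} f₁(y)·f₂(y')·log[ (e^{−My'}−e^{−My})/(y−y') ] dy dy' = 0. -/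
/-!
Off the diagonal, with `exprel x = (eˣ - 1) / x`,
`log ((e^{-My'} - e^{-My}) / (y - y')) = (log M - M y') + log (exprel (M (y' - y)))`.
The first term depends only on `y'`, so its contribution factors through
`∫ f₁ = √(2π) f̂₁(0) = 0`. The second depends only on `u = y - y'`; after the shear `y = u + t`
its contribution is `∫ log (exprel (-M u)) (∫ f₁(t + u) f₂(t) dt) du`, and the inner correlation
vanishes by Parseval: it equals `∫ e^{2πiuξ} 𝓕f₁(ξ) 𝓕f₂(-ξ) dξ`, whose integrand is zero because
both transforms vanish on `(-∞, 0]`. Both kernels grow at most linearly in `(y, y')`, which the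
Schwartz decay of `f₁ ⊗ f₂` absorbs.
-/

open MeasureTheory

open FourierTransform
open scoped SchwartzMap

lemma ft_two_pi_mul (g : ℝ → ℂ) (ξ : ℝ) :
    ft g (2 * Real.pi * ξ) = (1 / Real.sqrt (2 * Real.pi)) * 𝓕 g ξ := by
  rw [ft, Real.fourier_real_eq_integral_exp_smul]
  congr 2 with t
  rw [smul_eq_mul, mul_comm]
  push_cast
  ring_nf

lemma fourier_eq_zero_of_ft_eq_zero {g : ℝ → ℂ} (hg : ∀ k ≤ (0 : ℝ), ft g k = 0) {ξ : ℝ}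
    (hξ : ξ ≤ 0) : 𝓕 g ξ = 0 := by
  have h := hg (2 * Real.pi * ξ) (mul_nonpos_of_nonneg_of_nonpos (by positivity) hξ)
  rw [ft_two_pi_mul] at h
  exact (mul_eq_zero.1 h).resolve_left (by simp [Real.sqrt_ne_zero'.2 Real.pi_pos])

lemma integral_comp_add_mul_eq_integral_fourier {f : ℝ → ℂ} (hf : Integrable f)
    (g : 𝓢(ℝ, ℂ)) (u : ℝ) :
    ∫ t, f (t + u) * g t = ∫ ξ, (𝐞 (u * ξ) • 𝓕 f ξ) * 𝓕⁻ g ξ := by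
  have hfu : Integrable (fun t ↦ f (t + u)) := hf.comp_add_right u
  have hparseval := VectorFourier.integral_fourierIntegral_smul_eq_flip (L := innerₗ ℝ)
    (μ := volume) (ν := volume) Real.continuous_fourierChar continuous_inner hfu
    (𝓕⁻ g).integrable
  have hshift : VectorFourier.fourierIntegral 𝐞 volume (innerₗ ℝ) (fun t ↦ f (t + u)) =
      fun ξ ↦ 𝐞 (u * ξ) • 𝓕 f ξ := by
    rw [← Function.comp_def, VectorFourier.fourierIntegral_comp_add_right]
    ext ξ
    rw [innerₗ_apply_apply, Real.inner_apply]
    rfl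
  have hinv : VectorFourier.fourierIntegral 𝐞 volume (innerₗ ℝ) ⇑(𝓕⁻ g : 𝓢(ℝ, ℂ)) = g := by
    change 𝓕 ⇑(𝓕⁻ g : 𝓢(ℝ, ℂ)) = g
    rw [← SchwartzMap.fourier_coe, fourier_fourierInv_eq]
  rw [hshift, flip_innerₗ, hinv] at hparseval
  simpa only [smul_eq_mul] using hparseval.symm

lemma integral_comp_add_mul_eq_zero {f : ℝ → ℂ} (hf : Integrable f) (g : 𝓢(ℝ, ℂ))
    (hf₀ : ∀ ξ ≤ (0 : ℝ), 𝓕 f ξ = 0) (hg₀ : ∀ ξ ≤ (0 : ℝ), 𝓕 g ξ = 0) (u : ℝ) :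
    ∫ t, f (t + u) * g t = 0 := by
  rw [integral_comp_add_mul_eq_integral_fourier hf, ← integral_zero ℝ ℂ]
  congr 1 with ξ
  rcases le_or_gt ξ 0 with hξ | hξ
  · simp [hf₀ ξ hξ]
  · rw [SchwartzMap.fourierInv_coe, Real.fourierInv_eq_fourier_neg, ← SchwartzMap.fourier_coe,
      hg₀ _ (by linarith), mul_zero]

-- Junk value `exprel 0 = 0` rather than the limit `1`; only `x ≠ 0` matters off the diagonal.
noncomputable def exprel (x : ℝ) : ℝ := (Real.exp x - 1) / x

lemma exp_sub_one_le_mul_exp (x : ℝ) : Real.exp x - 1 ≤ x * Real.exp x := by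
  have h := Real.add_one_le_exp (-x)
  have hinv : Real.exp (-x) * Real.exp x = 1 := by simp [← Real.exp_add]
  nlinarith [Real.exp_pos x]

lemma exp_neg_abs_le_exprel {x : ℝ} (hx : x ≠ 0) : Real.exp (-|x|) ≤ exprel x := by
  rw [exprel]
  rcases hx.lt_or_gt with hx | hx
  · rw [abs_of_neg hx, neg_neg, le_div_iff_of_neg hx]
    linarith [exp_sub_one_le_mul_exp x]
  · rw [abs_of_pos hx, le_div_iff₀ hx]
    have : Real.exp (-x) ≤ 1 := Real.exp_le_one_iff.2 (by linarith)
    nlinarith [Real.add_one_le_exp x]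

lemma exprel_le_exp_abs {x : ℝ} (hx : x ≠ 0) : exprel x ≤ Real.exp |x| := by
  rw [exprel]
  rcases hx.lt_or_gt with hx | hx
  · rw [abs_of_neg hx, div_le_iff_of_neg hx]
    have : 1 ≤ Real.exp (-x) := Real.one_le_exp (by linarith)
    nlinarith [Real.add_one_le_exp x]
  · rw [abs_of_pos hx, div_le_iff₀ hx]
    linarith [exp_sub_one_le_mul_exp x]

lemma exprel_pos {x : ℝ} (hx : x ≠ 0) : 0 < exprel x :=
  (Real.exp_pos _).trans_le (exp_neg_abs_le_exprel hx)

lemma abs_log_exprel_le (x : ℝ) : |Real.log (exprel x)| ≤ |x| := by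
  rcases eq_or_ne x 0 with rfl | hx
  · simp [exprel]
  have hlo := Real.log_le_log (Real.exp_pos _) (exp_neg_abs_le_exprel hx)
  have hhi := Real.log_le_log (exprel_pos hx) (exprel_le_exp_abs hx)
  rw [Real.log_exp] at hlo hhi
  exact abs_le.2 ⟨hlo, hhi⟩

lemma log_exp_neg_sub_exp_neg_div {M : ℝ} (hM : 0 < M) {y y' : ℝ} (h : y ≠ y') :
    Real.log ((Real.exp (-(M * y')) - Real.exp (-(M * y))) / (y - y')) =
      Real.log M - M * y' + Real.log (exprel (M * (y' - y))) := by
  have hne : M * (y' - y) ≠ 0 := mul_ne_zero hM.ne' (sub_ne_zero.2 h.symm)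
  have hsplit : (Real.exp (-(M * y')) - Real.exp (-(M * y))) / (y - y') =
      Real.exp (-(M * y')) * (M * exprel (M * (y' - y))) := by
    have hexp : Real.exp (-(M * y)) = Real.exp (-(M * y')) * Real.exp (M * (y' - y)) := by
      rw [← Real.exp_add]; ring_nf
    rw [exprel, hexp]
    field_simp
    ring
  rw [hsplit, Real.log_mul (Real.exp_ne_zero _) (mul_pos hM (exprel_pos hne)).ne',
    Real.log_exp, Real.log_mul hM.ne' (exprel_pos hne).ne']
  ring

lemma ae_prod_fst_ne_snd {α : Type*} [MeasurableSpace α] [MeasurableEq α] (μ ν : Measure α)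
    [SFinite ν] [NullSingletonClass ν] : ∀ᵐ p ∂μ.prod ν, p.1 ≠ p.2 := by
  simp only [ae_iff, ne_eq, not_not]
  refine (Measure.measure_prod_null (measurableSet_diagonal (α := α))).2 <|
    Filter.Eventually.of_forall fun x ↦ ?_
  simp [Set.preimage]

lemma measurableEmbedding_add_prod {G : Type*} [AddGroup G] [MeasurableSpace G]
    [MeasurableAdd₂ G] [MeasurableSub₂ G] :
    MeasurableEmbedding fun z : G × G ↦ (z.1 + z.2, z.2) := by
  refine MeasurableEmbedding.of_measurable_inverse (g := fun z ↦ (z.1 - z.2, z.2))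
    (by fun_prop) ?_ (by fun_prop) (fun z ↦ by simp)
  rw [Set.range_eq_univ.2 fun z ↦ ⟨(z.1 - z.2, z.2), by simp⟩]
  exact MeasurableSet.univ

lemma integral_mul_mul_comp_snd_eq_zero {f g h : ℝ → ℂ} (hf : ∫ x, f x = 0) :
    ∫ p : ℝ × ℝ, f p.1 * g p.2 * h p.2 = 0 := by
  simp_rw [mul_assoc]
  rw [Measure.volume_eq_prod, integral_prod_mul (fun x ↦ f x) fun y ↦ g y * h y, hf, zero_mul]

lemma integral_mul_mul_comp_sub_eq_zero {f g k : ℝ → ℂ}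
    (hcorr : ∀ u, ∫ t, f (t + u) * g t = 0) :
    ∫ p : ℝ × ℝ, f p.1 * g p.2 * k (p.1 - p.2) = 0 := by
  by_cases hint : Integrable fun p : ℝ × ℝ ↦ f p.1 * g p.2 * k (p.1 - p.2)
  swap
  · exact integral_undef hint
  have hshear := measurePreserving_add_prod (volume : Measure ℝ) volume
  rw [Measure.volume_eq_prod] at hint ⊢
  have hint' : Integrable (fun z : ℝ × ℝ ↦ f (z.1 + z.2) * g z.2 * k z.1) (volume.prod volume) := by
    simpa [Function.comp_def] using
      (hshear.integrable_comp_emb measurableEmbedding_add_prod).2 hint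
  rw [← hshear.integral_comp measurableEmbedding_add_prod]
  simp only [add_sub_cancel_right]
  rw [integral_prod _ hint']
  have hcorr' : ∀ u, ∫ t, f (u + t) * g t = 0 := fun u ↦ by simpa only [add_comm u] using hcorr u
  simp [integral_mul_const, hcorr']

lemma SchwartzMap.integrable_mul_mul_of_norm_le (f g : 𝓢(ℝ, ℂ)) {k : ℝ × ℝ → ℂ}
    (hk : AEStronglyMeasurable k) (a b : ℝ) (hbound : ∀ p, ‖k p‖ ≤ a + b * (|p.1| + |p.2|)) :
    Integrable fun p : ℝ × ℝ ↦ f p.1 * g p.2 * k p := by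
  have hxf : Integrable fun x : ℝ ↦ |x| * ‖f x‖ := by simpa using f.integrable_pow_mul volume 1
  have hxg : Integrable fun x : ℝ ↦ |x| * ‖g x‖ := by simpa using g.integrable_pow_mul volume 1
  have hdom : Integrable fun p : ℝ × ℝ ↦
      a * (‖f p.1‖ * ‖g p.2‖) + b * (|p.1| * ‖f p.1‖ * ‖g p.2‖ + ‖f p.1‖ * (|p.2| * ‖g p.2‖)) := by
    rw [Measure.volume_eq_prod]
    exact ((f.integrable.norm.mul_prod g.integrable.norm).const_mul a).add
      (((hxf.mul_prod g.integrable.norm).add (f.integrable.norm.mul_prod hxg)).const_mul b)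
  refine hdom.mono' ?_ (Filter.Eventually.of_forall fun p ↦ ?_)
  · exact ((f.continuous.comp continuous_fst).aestronglyMeasurable.mul
      (g.continuous.comp continuous_snd).aestronglyMeasurable).mul hk
  · rw [norm_mul, norm_mul]
    calc ‖f p.1‖ * ‖g p.2‖ * ‖k p‖ ≤ ‖f p.1‖ * ‖g p.2‖ * (a + b * (|p.1| + |p.2|)) :=
          mul_le_mul_of_nonneg_left (hbound p) (by positivity)
      _ = _ := by ring

lemma SchwartzMap.integrable_mul_mul_affine_snd (f g : 𝓢(ℝ, ℂ)) (c M : ℝ) :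
    Integrable fun p : ℝ × ℝ ↦ f p.1 * g p.2 * ((c - M * p.2 : ℝ) : ℂ) := by
  refine f.integrable_mul_mul_of_norm_le g (by fun_prop) |c| |M| fun p ↦ ?_
  rw [Complex.norm_real, Real.norm_eq_abs]
  calc |c - M * p.2| ≤ |c| + |M| * |p.2| := (abs_sub _ _).trans_eq (by rw [abs_mul])
    _ ≤ |c| + |M| * (|p.1| + |p.2|) := by gcongr; exact le_add_of_nonneg_left (abs_nonneg _)

lemma SchwartzMap.integrable_mul_mul_log_exprel_sub (f g : 𝓢(ℝ, ℂ)) (M : ℝ) :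
    Integrable fun p : ℝ × ℝ ↦
      f p.1 * g p.2 * ((Real.log (exprel (M * -(p.1 - p.2))) : ℝ) : ℂ) := by
  refine f.integrable_mul_mul_of_norm_le g
    (Measurable.aestronglyMeasurable (by unfold exprel; measurability)) 0 |M| fun p ↦ ?_
  rw [Complex.norm_real, Real.norm_eq_abs, zero_add]
  calc |Real.log (exprel (M * -(p.1 - p.2)))| ≤ |M * -(p.1 - p.2)| := abs_log_exprel_le _
    _ ≤ |M| * (|p.1| + |p.2|) := by rw [abs_mul, abs_neg]; gcongr; exact abs_sub _ _

theorem stmt15 (M : ℝ) (hM : 0 < M) (f₁ f₂ : SchwartzMap ℝ ℂ)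
    (hfreq₁ : ∀ k ≤ (0:ℝ), ft (⇑f₁) k = 0)
    (hfreq₂ : ∀ k ≤ (0:ℝ), ft (⇑f₂) k = 0) :
    ∫ p : ℝ × ℝ, f₁ p.1 * f₂ p.2 *
        (Real.log ((Real.exp (-(M * p.2)) - Real.exp (-(M * p.1))) / (p.1 - p.2)) : ℂ)
      = 0 := by
  have hf₁ : ∀ ξ ≤ (0 : ℝ), 𝓕 (⇑f₁) ξ = 0 := fun _ ↦ fourier_eq_zero_of_ft_eq_zero hfreq₁
  have hf₂ : ∀ ξ ≤ (0 : ℝ), 𝓕 (⇑f₂) ξ = 0 := fun _ ↦ fourier_eq_zero_of_ft_eq_zero hfreq₂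
  have hmean : ∫ t, f₁ t = 0 := by simpa [Real.fourier_real_eq] using hf₁ 0 le_rfl
  have hsplit : (fun p : ℝ × ℝ ↦ f₁ p.1 * f₂ p.2 *
        (Real.log ((Real.exp (-(M * p.2)) - Real.exp (-(M * p.1))) / (p.1 - p.2)) : ℂ)) =ᵐ[volume]
      fun p ↦ f₁ p.1 * f₂ p.2 * ((Real.log M - M * p.2 : ℝ) : ℂ) +
        f₁ p.1 * f₂ p.2 * ((Real.log (exprel (M * -(p.1 - p.2))) : ℝ) : ℂ) := by
    filter_upwards [ae_prod_fst_ne_snd volume volume] with p hp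
    rw [log_exp_neg_sub_exp_neg_div hM hp, neg_sub]
    push_cast
    ring
  rw [integral_congr_ae hsplit, integral_add (f₁.integrable_mul_mul_affine_snd f₂ _ M)
    (f₁.integrable_mul_mul_log_exprel_sub f₂ M),
    integral_mul_mul_comp_sub_eq_zero (k := fun u ↦ ((Real.log (exprel (M * -u)) : ℝ) : ℂ))
      (integral_comp_add_mul_eq_zero f₁.integrable f₂ hf₁ hf₂),
    integral_mul_mul_comp_snd_eq_zero (h := fun y ↦ ((Real.log M - M * y : ℝ) : ℂ)) hmean,
    add_zero]
end

section
/- (Null-mode limit, first property.) Let χ : ℝ → ℝ be Lipschitz continuous with 0 ≤ χ ≤ 1, χ(p) = 0 for p ≤ 0 and χ(p) = 1 for p ≥ 1. For n ≥ 1 set c_n = ∫₀^∞ χ(np)·e^{−2p²}/(2p) dp (a finite positive number, with c_n → ∞ as n → ∞). Then for every Schwartz function g : ℝ → ℂ, lim_{n→∞} (1/c_n) · ∫₀^∞ χ(np)·e^{−p²}·g(p)/(2p) dp = g(0). -/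
open MeasureTheory Filter Set


noncomputable def stmtU (χ : ℝ → ℝ) (n : ℕ) (p : ℝ) : ℝ :=
  χ (n * p) * Real.exp (-(2 * p ^ 2)) / (2 * p)

noncomputable def stmtH (χ : ℝ → ℝ) (g : SchwartzMap ℝ ℂ) (n : ℕ) (p : ℝ) : ℂ :=
  ((χ (n * p) : ℝ) : ℂ) * (((Real.exp (-(p ^ 2)) : ℝ) : ℂ) * g p
    - ((Real.exp (-(2 * p ^ 2)) : ℝ) : ℂ) * g 0) / ((2 * p : ℝ) : ℂ)

theorem stmt17 (χ : ℝ → ℝ) (L : NNReal) (hχlip : LipschitzWith L χ)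
    (h01 : ∀ p : ℝ, 0 ≤ χ p ∧ χ p ≤ 1)
    (h0 : ∀ p ≤ (0:ℝ), χ p = 0) (h1 : ∀ p ≥ (1:ℝ), χ p = 1)
    (c : ℕ → ℝ)
    (hc : ∀ n : ℕ, c n
      = ∫ p in Set.Ioi (0:ℝ), χ (n * p) * Real.exp (-(2 * p ^ 2)) / (2 * p))
    (g : SchwartzMap ℝ ℂ) :
    Filter.Tendsto (fun n : ℕ =>
        ((1 / c n : ℝ) : ℂ) *
          ∫ p in Set.Ioi (0:ℝ),
            ((χ (n * p) * Real.exp (-(p ^ 2)) : ℝ) : ℂ) * g p / ((2 * p : ℝ) : ℂ))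
      Filter.atTop (nhds (g 0)) := by
  have hχ0 : χ 0 = 0 := h0 0 le_rfl
  have hχnn : ∀ p, 0 ≤ χ p := fun p => (h01 p).1
  have hχ1 : ∀ p, χ p ≤ 1 := fun p => (h01 p).2
  have hχm : Measurable χ := hχlip.continuous.measurable
  have hχle : ∀ x : ℝ, χ x ≤ (L : ℝ) * |x| := by
    intro x
    have h := hχlip.dist_le_mul x 0
    rw [Real.dist_eq, Real.dist_eq, hχ0, sub_zero, sub_zero] at h
    exact (le_abs_self _).trans h
  -- basic integrable gaussians
  have hI1 : Integrable (fun p : ℝ => Real.exp (-(p ^ 2))) := by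
    simpa using integrable_exp_neg_mul_sq (one_pos)
  have hI2 : Integrable (fun p : ℝ => p * Real.exp (-(p ^ 2))) := by
    simpa using integrable_mul_exp_neg_mul_sq (one_pos)
  have hI3 : Integrable (fun p : ℝ => Real.exp (-(2 * p ^ 2))) := by
    simpa using integrable_exp_neg_mul_sq (two_pos)
  -- bounds on g
  obtain ⟨C0, hC0pos, hC0⟩ := g.decay 0 0
  have hg0 : ∀ x : ℝ, ‖g x‖ ≤ C0 := by
    intro x
    have := hC0 x
    simpa [norm_iteratedFDeriv_zero] using this
  obtain ⟨C1, hC1pos, hC1⟩ := g.decay 0 1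
  have hgd : ∀ x : ℝ, ‖fderiv ℝ (g : ℝ → ℂ) x‖ ≤ C1 := by
    intro x
    have h := hC1 x
    rw [pow_zero, one_mul] at h
    have e : ‖fderiv ℝ (g : ℝ → ℂ) x‖ = ‖iteratedFDeriv ℝ 1 (g : ℝ → ℂ) x‖ := by
      rw [← norm_iteratedFDeriv_fderiv (n := 0), norm_iteratedFDeriv_zero]
    rw [e]; exact h
  have hglip : ∀ x : ℝ, 0 ≤ x → ‖g x - g 0‖ ≤ C1 * x := by
    intro x hx
    have := Convex.norm_image_sub_le_of_norm_fderiv_le (f := (g : ℝ → ℂ)) (s := Set.univ)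
      (fun y _ => g.differentiable y) (fun y _ => hgd y) convex_univ (Set.mem_univ 0)
      (Set.mem_univ x)
    simpa [Real.norm_eq_abs, abs_of_nonneg hx] using this
  -- restate integrability in terms of stmtU
  have hum : ∀ n : ℕ, Measurable (stmtU χ n) := by
    intro n
    apply Measurable.div
    · exact (hχm.comp (measurable_const_mul _)).mul
        ((measurable_id.pow_const 2).const_mul 2).neg.exp
    · exact measurable_const_mul 2
  have huint : ∀ n : ℕ, IntegrableOn (stmtU χ n) (Set.Ioi 0) := by
    intro n
    apply Integrable.mono' ((hI3.const_mul ((L : ℝ) * n / 2)).restrict)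
      (hum n).aestronglyMeasurable
    filter_upwards [ae_restrict_mem measurableSet_Ioi] with p hp
    have hp0 : (0:ℝ) < p := hp
    have hb : χ (n * p) ≤ (L : ℝ) * (n * p) := by
      have := hχle (n * p)
      rwa [abs_of_nonneg (by positivity)] at this
    have hnn : 0 ≤ stmtU χ n p :=
      div_nonneg (mul_nonneg (hχnn _) (Real.exp_pos _).le) (by positivity)
    rw [Real.norm_eq_abs, abs_of_nonneg hnn]
    have : stmtU χ n p
        ≤ ((L : ℝ) * (n * p)) * Real.exp (-(2 * p ^ 2)) / (2 * p) := by
      apply div_le_div_of_nonneg_right ?_ (by positivity)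
      exact mul_le_mul_of_nonneg_right hb (Real.exp_pos _).le
    refine this.trans (le_of_eq ?_)
    field_simp
  have hunn : ∀ n : ℕ, 0 ≤ᵐ[volume.restrict (Set.Ioi (0:ℝ))] stmtU χ n := by
    intro n
    filter_upwards [ae_restrict_mem measurableSet_Ioi] with p hp
    have hp0 : (0:ℝ) < p := hp
    exact div_nonneg (mul_nonneg (hχnn _) (Real.exp_pos _).le) (by positivity)
  -- pointwise bound on the remainder integrand
  have hhb : ∀ p : ℝ, 0 ≤ p →
      ‖((Real.exp (-(p ^ 2)) : ℝ) : ℂ) * g p - ((Real.exp (-(2 * p ^ 2)) : ℝ) : ℂ) * g 0‖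
        ≤ (C1 * p + p ^ 2 * ‖g 0‖) * Real.exp (-(p ^ 2)) := by
    intro p hp
    have hsplit : ((Real.exp (-(p ^ 2)) : ℝ) : ℂ) * g p
          - ((Real.exp (-(2 * p ^ 2)) : ℝ) : ℂ) * g 0
        = ((Real.exp (-(p ^ 2)) : ℝ) : ℂ) * (g p - g 0)
          + ((Real.exp (-(p ^ 2)) - Real.exp (-(2 * p ^ 2)) : ℝ) : ℂ) * g 0 := by
      push_cast; ring
    have he : Real.exp (-(2 * p ^ 2)) = Real.exp (-(p ^ 2)) * Real.exp (-(p ^ 2)) := by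
      rw [← Real.exp_add]; ring_nf
    have h3 : 1 - Real.exp (-(p ^ 2)) ≤ p ^ 2 := by
      have := Real.add_one_le_exp (-(p ^ 2)); linarith
    have h2 : Real.exp (-(p ^ 2)) - Real.exp (-(2 * p ^ 2)) ≤ p ^ 2 * Real.exp (-(p ^ 2)) := by
      calc Real.exp (-(p ^ 2)) - Real.exp (-(2 * p ^ 2))
          = Real.exp (-(p ^ 2)) * (1 - Real.exp (-(p ^ 2))) := by rw [he]; ring
        _ ≤ Real.exp (-(p ^ 2)) * p ^ 2 := mul_le_mul_of_nonneg_left h3 (Real.exp_pos _).le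
        _ = p ^ 2 * Real.exp (-(p ^ 2)) := by ring
    have h2' : 0 ≤ Real.exp (-(p ^ 2)) - Real.exp (-(2 * p ^ 2)) := by
      have hle : (-(2 * p ^ 2)) ≤ (-(p ^ 2)) := by nlinarith
      have := Real.exp_le_exp.2 hle; linarith
    calc ‖((Real.exp (-(p ^ 2)) : ℝ) : ℂ) * g p - ((Real.exp (-(2 * p ^ 2)) : ℝ) : ℂ) * g 0‖
        ≤ ‖((Real.exp (-(p ^ 2)) : ℝ) : ℂ) * (g p - g 0)‖
          + ‖((Real.exp (-(p ^ 2)) - Real.exp (-(2 * p ^ 2)) : ℝ) : ℂ) * g 0‖ := by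
          rw [hsplit]; exact norm_add_le _ _
      _ ≤ Real.exp (-(p ^ 2)) * (C1 * p) + (p ^ 2 * Real.exp (-(p ^ 2))) * ‖g 0‖ := by
          apply add_le_add
          · rw [norm_mul, Complex.norm_real, Real.norm_eq_abs,
              abs_of_nonneg (Real.exp_pos _).le]
            exact mul_le_mul_of_nonneg_left (hglip p hp) (Real.exp_pos _).le
          · rw [norm_mul, Complex.norm_real, Real.norm_eq_abs, abs_of_nonneg h2']
            exact mul_le_mul_of_nonneg_right h2 (norm_nonneg _)
      _ = (C1 * p + p ^ 2 * ‖g 0‖) * Real.exp (-(p ^ 2)) := by ring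
  -- dominating function for the remainder
  have hDint : IntegrableOn
      (fun p : ℝ => C1 / 2 * Real.exp (-(p ^ 2)) + ‖g 0‖ / 2 * (p * Real.exp (-(p ^ 2))))
      (Set.Ioi 0) :=
    ((hI1.const_mul _).add (hI2.const_mul _)).restrict
  have hHm : ∀ n : ℕ, Measurable (stmtH χ g n) := by
    intro n
    apply Measurable.div
    · apply Measurable.mul
      · exact Complex.measurable_ofReal.comp (hχm.comp (measurable_const_mul _))
      · apply Measurable.sub
        · exact (Complex.measurable_ofReal.comp
            (Real.measurable_exp.comp (measurable_id.pow_const 2).neg)).mul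
            g.continuous.measurable
        · exact (Complex.measurable_ofReal.comp
            (Real.measurable_exp.comp ((measurable_id.pow_const 2).const_mul 2).neg)).mul
            measurable_const
    · exact Complex.measurable_ofReal.comp (measurable_const_mul 2)
  have hHb : ∀ n : ℕ, ∀ p ∈ Set.Ioi (0:ℝ), ‖stmtH χ g n p‖
      ≤ C1 / 2 * Real.exp (-(p ^ 2)) + ‖g 0‖ / 2 * (p * Real.exp (-(p ^ 2))) := by
    intro n p hp
    have hp0 : (0:ℝ) < p := hp
    have hnorm : ‖stmtH χ g n p‖ = χ (n * p)
        * ‖((Real.exp (-(p ^ 2)) : ℝ) : ℂ) * g p - ((Real.exp (-(2 * p ^ 2)) : ℝ) : ℂ) * g 0‖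
        / (2 * p) := by
      rw [stmtH, norm_div, norm_mul, Complex.norm_real, Complex.norm_real,
        Real.norm_eq_abs, Real.norm_eq_abs, abs_of_nonneg (hχnn _),
        abs_of_nonneg (by positivity : (0:ℝ) ≤ 2 * p)]
    rw [hnorm]
    calc χ (n * p)
        * ‖((Real.exp (-(p ^ 2)) : ℝ) : ℂ) * g p - ((Real.exp (-(2 * p ^ 2)) : ℝ) : ℂ) * g 0‖
        / (2 * p)
        ≤ 1 * ((C1 * p + p ^ 2 * ‖g 0‖) * Real.exp (-(p ^ 2))) / (2 * p) := by
          apply div_le_div_of_nonneg_right ?_ (by positivity)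
          apply mul_le_mul (hχ1 _) (hhb p hp0.le) (norm_nonneg _) one_pos.le
      _ = C1 / 2 * Real.exp (-(p ^ 2)) + ‖g 0‖ / 2 * (p * Real.exp (-(p ^ 2))) := by
          field_simp
  have hHint : ∀ n : ℕ, IntegrableOn (stmtH χ g n) (Set.Ioi 0) := by
    intro n
    apply Integrable.mono' hDint (hHm n).aestronglyMeasurable
    filter_upwards [ae_restrict_mem measurableSet_Ioi] with p hp
    exact hHb n p hp
  have hRb : ∀ n : ℕ, ‖∫ p in Set.Ioi (0:ℝ), stmtH χ g n p‖
      ≤ ∫ p in Set.Ioi (0:ℝ),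
          (C1 / 2 * Real.exp (-(p ^ 2)) + ‖g 0‖ / 2 * (p * Real.exp (-(p ^ 2)))) := by
    intro n
    apply norm_integral_le_of_norm_le hDint
    filter_upwards [ae_restrict_mem measurableSet_Ioi] with p hp
    exact hHb n p hp
  -- decomposition of the main integral
  have hIeq : ∀ n : ℕ,
      (∫ p in Set.Ioi (0:ℝ),
        ((χ (n * p) * Real.exp (-(p ^ 2)) : ℝ) : ℂ) * g p / ((2 * p : ℝ) : ℂ))
      = ((c n : ℝ) : ℂ) * g 0 + ∫ p in Set.Ioi (0:ℝ), stmtH χ g n p := by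
    intro n
    have hdecomp : ∀ p : ℝ,
        ((χ (n * p) * Real.exp (-(p ^ 2)) : ℝ) : ℂ) * g p / ((2 * p : ℝ) : ℂ)
        = ((stmtU χ n p : ℝ) : ℂ) * g 0 + stmtH χ g n p := by
      intro p
      rw [stmtU, stmtH]
      push_cast
      ring
    rw [integral_congr_ae (Filter.Eventually.of_forall hdecomp)]
    have hadd := integral_add (μ := volume.restrict (Set.Ioi 0))
      (f := fun p : ℝ => ((stmtU χ n p : ℝ) : ℂ) * g 0) (g := stmtH χ g n)
      (((huint n).ofReal).mul_const _) (hHint n)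
    rw [hadd]
    congr 1
    rw [show (fun p => ((stmtU χ n p : ℝ) : ℂ) * g 0)
        = fun p => stmtU χ n p • g 0 from funext fun p => Complex.real_smul.symm]
    rw [integral_smul_const, hc n, Complex.real_smul]
    rfl
  have hcu : ∀ n : ℕ, c n = ∫ p in Set.Ioi (0:ℝ), stmtU χ n p := fun n => hc n
  -- lower bound for c n
  have hclog : ∀ n : ℕ, 1 ≤ n → Real.exp (-2) / 2 * Real.log n ≤ c n := by
    intro n hn
    have hn0 : (0:ℝ) < n := by exact_mod_cast hn
    have ha : (0:ℝ) < 1 / n := by positivity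
    have ha1 : 1 / (n:ℝ) ≤ 1 := by
      rw [div_le_one hn0]; exact_mod_cast hn
    have hsub : Set.Ioc (1/(n:ℝ)) 1 ⊆ Set.Ioi 0 := fun x hx => lt_trans ha hx.1
    have hinv : IntervalIntegrable (fun p : ℝ => p⁻¹) volume (1/(n:ℝ)) 1 := by
      rw [intervalIntegrable_inv_iff]
      right
      intro hmem
      rcases Set.mem_uIcc.1 hmem with h | h
      · exact absurd h.1 (not_le.2 ha)
      · linarith [h.1]
    have hinvI : IntegrableOn (fun p : ℝ => Real.exp (-2) / 2 * p⁻¹)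
        (Set.Ioc (1/(n:ℝ)) 1) := by
      have := (hinv.const_mul (Real.exp (-2) / 2))
      rwa [intervalIntegrable_iff_integrableOn_Ioc_of_le ha1] at this
    have step1 : ∫ p in Set.Ioc (1/(n:ℝ)) 1, Real.exp (-2) / 2 * p⁻¹
        ≤ ∫ p in Set.Ioc (1/(n:ℝ)) 1, stmtU χ n p := by
      apply setIntegral_mono_on hinvI ((huint n).mono_set hsub) measurableSet_Ioc
      intro p hp
      have hp0 : (0:ℝ) < p := lt_trans ha hp.1
      have hχeq : χ (n * p) = 1 := by
        apply h1
        have h1n : 1 / (n:ℝ) < p := hp.1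
        rw [ge_iff_le]
        calc (1:ℝ) = n * (1/n) := by field_simp
          _ ≤ n * p := by nlinarith
      have hexp : Real.exp (-2) ≤ Real.exp (-(2 * p ^ 2)) := by
        apply Real.exp_le_exp.2
        nlinarith [hp.2, hp0]
      have heq : Real.exp (-2) / 2 * p⁻¹ = Real.exp (-2) / (2 * p) := by
        field_simp
      rw [heq, stmtU, hχeq, one_mul]
      exact div_le_div_of_nonneg_right hexp (by positivity)
    have step2 : ∫ p in Set.Ioc (1/(n:ℝ)) 1, stmtU χ n p
        ≤ ∫ p in Set.Ioi (0:ℝ), stmtU χ n p :=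
      setIntegral_mono_set (huint n) (hunn n) (HasSubset.Subset.eventuallyLE hsub)
    have hval : ∫ p in Set.Ioc (1/(n:ℝ)) 1, Real.exp (-2) / 2 * p⁻¹
        = Real.exp (-2) / 2 * Real.log n := by
      rw [integral_const_mul, ← intervalIntegral.integral_of_le ha1,
        integral_inv_of_pos ha one_pos, one_div_one_div]
    rw [hcu n]
    rw [hval] at step1
    linarith
  have hctop : Tendsto c atTop atTop := by
    apply tendsto_atTop_mono' atTop ?_
      (Tendsto.const_mul_atTop (by positivity : (0:ℝ) < Real.exp (-2) / 2)
        (Real.tendsto_log_atTop.comp tendsto_natCast_atTop_atTop))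
    filter_upwards [eventually_ge_atTop 1] with n hn
    exact hclog n hn
  have hcpos : ∀ᶠ n : ℕ in atTop, 0 < c n := hctop.eventually_gt_atTop 0
  -- the remainder term tends to zero
  have hzero : Tendsto (fun n : ℕ =>
      ((1 / c n : ℝ) : ℂ) * ∫ p in Set.Ioi (0:ℝ), stmtH χ g n p) atTop (nhds 0) := by
    apply squeeze_zero_norm' (a := fun n : ℕ => (1 / c n)
      * ∫ p in Set.Ioi (0:ℝ),
          (C1 / 2 * Real.exp (-(p ^ 2)) + ‖g 0‖ / 2 * (p * Real.exp (-(p ^ 2)))))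
    · filter_upwards [hcpos] with n hn
      rw [norm_mul, Complex.norm_real, Real.norm_eq_abs,
        abs_of_nonneg (by positivity : (0:ℝ) ≤ 1 / c n)]
      exact mul_le_mul_of_nonneg_left (hRb n) (by positivity)
    · have h0' : Tendsto (fun n : ℕ => (c n)⁻¹) atTop (nhds 0) :=
        hctop.inv_tendsto_atTop
      have := h0'.mul_const (∫ p in Set.Ioi (0:ℝ),
          (C1 / 2 * Real.exp (-(p ^ 2)) + ‖g 0‖ / 2 * (p * Real.exp (-(p ^ 2)))))
      simpa [one_div] using this
  have htend : Tendsto (fun n : ℕ =>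
      g 0 + ((1 / c n : ℝ) : ℂ) * ∫ p in Set.Ioi (0:ℝ), stmtH χ g n p)
      atTop (nhds (g 0)) := by
    simpa using tendsto_const_nhds.add hzero
  refine Tendsto.congr' ?_ htend
  filter_upwards [hcpos] with n hn
  rw [hIeq n]
  have hne : ((c n : ℝ) : ℂ) ≠ 0 := by exact_mod_cast hn.ne'
  push_cast
  field_simp
end

section
/- (Null-mode limit, second property: the null mode has vanishing norm.) Let χ : ℝ → ℝ be Lipschitz continuous with 0 ≤ χ ≤ 1, χ(p) = 0 for p ≤ 0 and χ(p) = 1 for p ≥ 1. For n ≥ 1 set c_n = ∫₀^∞ χ(np)·e^{−2p²}/(2p) dp (a finite positive number). Then lim_{n→∞} (1/c_n²) · ∫₀^∞ χ(np)²·e^{−2p²}/(2p) dp = 0. -/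
open MeasureTheory Filter

theorem stmt18 (χ : ℝ → ℝ) (L : NNReal) (hχlip : LipschitzWith L χ)
    (h01 : ∀ p : ℝ, 0 ≤ χ p ∧ χ p ≤ 1)
    (h0 : ∀ p ≤ (0:ℝ), χ p = 0) (h1 : ∀ p ≥ (1:ℝ), χ p = 1)
    (c : ℕ → ℝ)
    (hc : ∀ n : ℕ, c n
      = ∫ p in Set.Ioi (0:ℝ), χ (n * p) * Real.exp (-(2 * p ^ 2)) / (2 * p)) :
    Filter.Tendsto (fun n : ℕ =>
        (1 / (c n) ^ 2) *
          ∫ p in Set.Ioi (0:ℝ), (χ (n * p)) ^ 2 * Real.exp (-(2 * p ^ 2)) / (2 * p))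
      Filter.atTop (nhds 0) := by
  have hχc : Continuous χ := hχlip.continuous
  set g : ℕ → ℝ → ℝ := fun n p => χ (n*p) * Real.exp (-(2*p^2)) / (2*p) with hgdef
  set G : ℕ → ℝ → ℝ := fun n p => (χ (n*p))^2 * Real.exp (-(2*p^2)) / (2*p) with hGdef
  -- χ(np) ≤ L n p for p > 0
  have hlin : ∀ n : ℕ, ∀ p : ℝ, 0 < p → χ (n*p) ≤ (L:ℝ) * (n*p) := by
    intro n p hp
    have h := hχlip.dist_le_mul ((n:ℝ)*p) 0
    rw [Real.dist_eq, Real.dist_eq, h0 0 le_rfl] at h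
    simp only [sub_zero] at h
    calc χ (n*p) ≤ |χ (n*p)| := le_abs_self _
      _ ≤ (L:ℝ) * |(n:ℝ)*p| := h
      _ = (L:ℝ) * (n*p) := by
          rw [abs_of_nonneg (by positivity)]
  have hgnn : ∀ n : ℕ, ∀ p : ℝ, 0 < p → 0 ≤ g n p := by
    intro n p hp
    have := (h01 (n*p)).1
    positivity
  have hGnn : ∀ n : ℕ, ∀ p : ℝ, 0 < p → 0 ≤ G n p := by
    intro n p hp
    have := (h01 (n*p)).1
    positivity
  have hGg : ∀ n : ℕ, ∀ p : ℝ, 0 < p → G n p ≤ g n p := by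
    intro n p hp
    have h2 : χ (n*p) ^ 2 ≤ χ (n*p) :=
      pow_le_of_le_one (h01 _).1 (h01 _).2 two_ne_zero
    have he : (0:ℝ) ≤ Real.exp (-(2*p^2)) := (Real.exp_pos _).le
    have h2p : (0:ℝ) < 2*p := by linarith
    exact div_le_div_of_nonneg_right (mul_le_mul_of_nonneg_right h2 he) h2p.le
  have hbound : ∀ n : ℕ, ∀ p : ℝ, 0 < p →
      g n p ≤ ((L:ℝ) * n / 2) * Real.exp (-(2*p^2)) := by
    intro n p hp
    have he : (0:ℝ) ≤ Real.exp (-(2*p^2)) := (Real.exp_pos _).le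
    have h2p : (0:ℝ) < 2*p := by linarith
    have : g n p ≤ ((L:ℝ) * (n*p)) * Real.exp (-(2*p^2)) / (2*p) :=
      div_le_div_of_nonneg_right (mul_le_mul_of_nonneg_right (hlin n p hp) he) h2p.le
    refine this.trans_eq ?_
    field_simp
  have hgauss : Integrable (fun p : ℝ => Real.exp (-(2*p^2))) := by
    have := integrable_exp_neg_mul_sq (by norm_num : (0:ℝ) < 2)
    simpa [neg_mul] using this
  have hmeas : ∀ n : ℕ, AEStronglyMeasurable (g n) (volume.restrict (Set.Ioi 0)) := by
    intro n
    apply Measurable.aestronglyMeasurable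
    exact ((hχc.comp (continuous_const.mul continuous_id)).measurable.mul
      (Real.continuous_exp.comp ((continuous_const.mul (continuous_pow 2)).neg)).measurable).div
      (measurable_const.mul measurable_id)
  have hGmeas : ∀ n : ℕ, AEStronglyMeasurable (G n) (volume.restrict (Set.Ioi 0)) := by
    intro n
    apply Measurable.aestronglyMeasurable
    exact (((hχc.comp (continuous_const.mul continuous_id)).pow 2).measurable.mul
      (Real.continuous_exp.comp ((continuous_const.mul (continuous_pow 2)).neg)).measurable).div
      (measurable_const.mul measurable_id)
  have hint : ∀ n : ℕ, IntegrableOn (g n) (Set.Ioi 0) := by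
    intro n
    refine Integrable.mono ((hgauss.const_mul ((L:ℝ)*n/2)).restrict) (hmeas n) ?_
    rw [ae_restrict_iff' measurableSet_Ioi]
    filter_upwards with p hp
    rw [Real.norm_eq_abs, Real.norm_eq_abs, abs_of_nonneg (hgnn n p hp),
      abs_of_nonneg (by positivity)]
    exact hbound n p hp
  have hGint : ∀ n : ℕ, IntegrableOn (G n) (Set.Ioi 0) := by
    intro n
    refine Integrable.mono ((hint n)) (hGmeas n) ?_
    rw [ae_restrict_iff' measurableSet_Ioi]
    filter_upwards with p hp
    rw [Real.norm_eq_abs, Real.norm_eq_abs, abs_of_nonneg (hGnn n p hp),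
      abs_of_nonneg (hgnn n p hp)]
    exact hGg n p hp
  have hIc : ∀ n : ℕ, (∫ p in Set.Ioi (0:ℝ), G n p) ≤ c n := by
    intro n
    rw [hc n]
    exact setIntegral_mono_on (hGint n) (hint n) measurableSet_Ioi
      (fun p hp => hGg n p hp)
  have hI0 : ∀ n : ℕ, 0 ≤ ∫ p in Set.Ioi (0:ℝ), G n p := by
    intro n
    exact setIntegral_nonneg measurableSet_Ioi (fun p hp => hGnn n p hp)
  -- lower bound on c n
  have hclb : ∀ n : ℕ, 1 ≤ n → Real.exp (-2) / 2 * Real.log n ≤ c n := by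
    intro n hn
    have hn0 : (0:ℝ) < n := by exact_mod_cast Nat.pos_of_ne_zero (by omega)
    set a : ℝ := 1 / n with ha
    have ha0 : 0 < a := by positivity
    have ha1 : a ≤ 1 := by
      rw [ha, div_le_one hn0]
      exact_mod_cast hn
    have hsub : Set.Ioc a 1 ⊆ Set.Ioi (0:ℝ) := fun x hx => lt_of_lt_of_le ha0 hx.1.le
    -- step 1
    have hstep1 : (∫ p in Set.Ioc a 1, g n p) ≤ c n := by
      rw [hc n]
      refine setIntegral_mono_set (hint n) ?_ (HasSubset.Subset.eventuallyLE hsub)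
      exact (ae_restrict_iff' measurableSet_Ioi).2
        (Filter.Eventually.of_forall fun p hp => hgnn n p hp)
    -- step 2
    have hinv : IntegrableOn (fun p : ℝ => Real.exp (-2) * (2*p)⁻¹) (Set.Ioc a 1) := by
      have hcont : ContinuousOn (fun p : ℝ => Real.exp (-2) * (2*p)⁻¹) (Set.Icc a 1) := by
        refine continuousOn_const.mul (ContinuousOn.inv₀ (by fun_prop) ?_)
        intro x hx
        have : 0 < x := lt_of_lt_of_le ha0 hx.1
        positivity
      exact (hcont.integrableOn_Icc).mono_set Set.Ioc_subset_Icc_self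
    have hstep2 : (∫ p in Set.Ioc a 1, Real.exp (-2) * (2*p)⁻¹)
        ≤ ∫ p in Set.Ioc a 1, g n p := by
      refine setIntegral_mono_on hinv ((hint n).mono_set hsub) measurableSet_Ioc ?_
      intro p hp
      have hp0 : 0 < p := lt_of_lt_of_le ha0 hp.1.le
      have hnp : (1:ℝ) ≤ (n:ℝ) * p := by
        have : a < p := hp.1
        rw [ha] at this
        rw [div_lt_iff₀ hn0] at this
        nlinarith
      have hχ1 : χ ((n:ℝ)*p) = 1 := h1 _ hnp
      have hexp : Real.exp (-2) ≤ Real.exp (-(2*p^2)) := by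
        apply Real.exp_le_exp.2
        nlinarith [hp.2, hp0]
      simp only [hgdef, hχ1, one_mul]
      rw [div_eq_mul_inv]
      exact mul_le_mul_of_nonneg_right hexp (by positivity)
    -- step 3
    have hstep3 : (∫ p in Set.Ioc a 1, Real.exp (-2) * (2*p)⁻¹)
        = Real.exp (-2) / 2 * Real.log n := by
      have h1' : ∀ p : ℝ, Real.exp (-2) * (2*p)⁻¹ = (Real.exp (-2) / 2) * p⁻¹ := by
        intro p
        rw [mul_inv]
        ring
      simp_rw [h1']
      rw [integral_const_mul]
      congr 1
      have := integral_inv_of_pos ha0 (one_pos)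
      rw [_root_.intervalIntegral.integral_of_le ha1] at this
      rw [this, ha]
      rw [one_div_one_div]
    linarith
  -- final squeeze
  have hlog : Tendsto (fun n : ℕ => Real.exp (-2) / 2 * Real.log n) atTop atTop := by
    apply Tendsto.const_mul_atTop (by positivity)
    exact Real.tendsto_log_atTop.comp tendsto_natCast_atTop_atTop
  apply squeeze_zero' (Filter.Eventually.of_forall (fun n => by
      have := hI0 n
      positivity))
    ?_ hlog.inv_tendsto_atTop
  -- eventually term n ≤ (exp(-2)/2 * log n)⁻¹
  have hev : ∀ᶠ n : ℕ in atTop, 1 ≤ Real.exp (-2) / 2 * Real.log n := by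
    have := hlog.eventually_ge_atTop 1
    exact this
  filter_upwards [hev, Filter.eventually_ge_atTop 1] with n h1n hn1
  have hKpos : (0:ℝ) < Real.exp (-2) / 2 * Real.log n := by linarith
  have hcpos : 0 < c n := lt_of_lt_of_le hKpos (hclb n hn1)
  have h1 : (1 / (c n)^2) * (∫ p in Set.Ioi (0:ℝ), G n p) ≤ 1 / c n := by
    have := mul_le_mul_of_nonneg_left (hIc n) (by positivity : (0:ℝ) ≤ 1/(c n)^2)
    refine this.trans_eq ?_
    field_simp
  refine h1.trans ?_
  rw [one_div]
  exact inv_anti₀ hKpos (hclb n hn1)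
end
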